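/- arXiv:2408.13043 — 8 statements merged into one kernel-verified Lean document; each statement's English description precedes it below -/
import Mathlib

section
/- Let n ≥ 1, let J ∈ GL_n(ℂ), let c ∈ ℂ \ {0}, and let Ω ∈ ℂ^{n×n} satisfy Ω J + J Ω* = 0. If I − cΩ is invertible, then the matrix A = (I − cΩ)^{-1}(I + c̄Ω) satisfies A J A* = J; in particular A is invertible, i.e. the c-Cayley transform maps the Lie algebra 𝔤 into the quadratic Lie group G. -/
open scoped Matrix

/-!
Write the Cayley transform as `B⁻¹ C` with `B = 1 - cΩ` and `C = 1 + c̄Ω`. Expanding,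
`C J Cᴴ - B J Bᴴ = (c + c̄) (Ω J + J Ωᴴ)`, which vanishes on the Lie algebra; hence
`B⁻¹ C J Cᴴ B⁻ᴴ = J`. Invertibility follows because `J (B⁻¹ C)ᴴ J⁻¹` is a right inverse.
-/

namespace Matrix

variable {n R : Type*} [Fintype n] [DecidableEq n] [CommRing R] [StarRing R]

theorem one_add_star_smul_mul_mul_conjTranspose_eq {J Ω : Matrix n n R} (c : R)
    (hΩ : Ω * J + J * Ωᴴ = 0) :
    (1 + starRingEnd R c • Ω) * J * (1 + starRingEnd R c • Ω)ᴴ =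
      (1 - c • Ω) * J * (1 - c • Ω)ᴴ := by
  have hJΩ : J * Ωᴴ = -(Ω * J) := eq_neg_of_add_eq_zero_right hΩ
  simp only [conjTranspose_add, conjTranspose_sub, conjTranspose_smul, conjTranspose_one,
    starRingEnd_apply, star_star, Matrix.mul_add, Matrix.add_mul, Matrix.mul_sub,
    Matrix.sub_mul, Matrix.mul_smul, Matrix.smul_mul, Matrix.one_mul, Matrix.mul_one,
    hJΩ]
  module

theorem nonsing_inv_mul_mul_mul_conjTranspose_eq {B C J : Matrix n n R} (hB : IsUnit B)
    (hBC : C * J * Cᴴ = B * J * Bᴴ) : (B⁻¹ * C) * J * (B⁻¹ * C)ᴴ = J := by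
  have hBdet : IsUnit B.det := (isUnit_iff_isUnit_det B).mp hB
  calc (B⁻¹ * C) * J * (B⁻¹ * C)ᴴ = B⁻¹ * (C * J * Cᴴ) * B⁻¹ᴴ := by
        simp only [conjTranspose_mul, Matrix.mul_assoc]
    _ = (B⁻¹ * B) * J * (B⁻¹ * B)ᴴ := by
        rw [hBC, conjTranspose_mul (B⁻¹) B]; simp only [Matrix.mul_assoc]
    _ = J := by rw [nonsing_inv_mul B hBdet, conjTranspose_one, Matrix.one_mul, Matrix.mul_one]

theorem isUnit_of_mul_mul_conjTranspose_eq {A J : Matrix n n R} (hJ : IsUnit J)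
    (hA : A * J * Aᴴ = J) : IsUnit A := by
  have hJdet : IsUnit J.det := (isUnit_iff_isUnit_det J).mp hJ
  refine (isUnit_iff_isUnit_det A).mpr (isUnit_det_of_right_inverse (B := J * Aᴴ * J⁻¹) ?_)
  calc A * (J * Aᴴ * J⁻¹) = A * J * Aᴴ * J⁻¹ := by simp only [Matrix.mul_assoc]
    _ = 1 := by rw [hA, mul_nonsing_inv J hJdet]

end Matrix

theorem cayley_maps_lie_algebra_into_quadratic_group_general
    (n : ℕ)
    (J : Matrix (Fin n) (Fin n) ℂ) (hJ : IsUnit J)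
    (c : ℂ)
    (Ω : Matrix (Fin n) (Fin n) ℂ) (hΩ : Ω * J + J * Ωᴴ = 0)
    (hinv : IsUnit (1 - c • Ω)) :
    ((1 - c • Ω)⁻¹ * (1 + (starRingEnd ℂ c) • Ω)) * J *
        ((1 - c • Ω)⁻¹ * (1 + (starRingEnd ℂ c) • Ω))ᴴ = J ∧
      IsUnit ((1 - c • Ω)⁻¹ * (1 + (starRingEnd ℂ c) • Ω)) := by
  have hG := Matrix.nonsing_inv_mul_mul_mul_conjTranspose_eq hinv
    (Matrix.one_add_star_smul_mul_mul_conjTranspose_eq c hΩ)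
  exact ⟨hG, Matrix.isUnit_of_mul_mul_conjTranspose_eq hJ hG⟩

/-- The c-Cayley transform maps the Lie algebra
`𝔤 = {Ω : Ω J + J Ωᴴ = 0}` into the quadratic Lie group `G = {A : A J Aᴴ = J}`. -/
theorem cayley_maps_lie_algebra_into_quadratic_group
    (n : ℕ) (hn : 1 ≤ n)
    (J : Matrix (Fin n) (Fin n) ℂ) (hJ : IsUnit J)
    (c : ℂ) (hc : c ≠ 0)
    (Ω : Matrix (Fin n) (Fin n) ℂ) (hΩ : Ω * J + J * Ωᴴ = 0)
    (hinv : IsUnit (1 - c • Ω)) :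
    ((1 - c • Ω)⁻¹ * (1 + (starRingEnd ℂ c) • Ω)) * J *
        ((1 - c • Ω)⁻¹ * (1 + (starRingEnd ℂ c) • Ω))ᴴ = J ∧
      IsUnit ((1 - c • Ω)⁻¹ * (1 + (starRingEnd ℂ c) • Ω)) :=
  cayley_maps_lie_algebra_into_quadratic_group_general n J hJ c Ω hΩ hinv
end

section
/- Let n ≥ 1, let J ∈ GL_n(ℂ), let c ∈ ℂ \ {0}, and let A ∈ ℂ^{n×n} satisfy A J A* = J. If I + (c/c̄)A is invertible, then the matrix Ω = −(1/c̄)(I + (c/c̄)A)^{-1}(I − A) satisfies Ω J + J Ω* = 0; moreover, if additionally I − cΩ is invertible, then (I − cΩ)^{-1}(I + c̄Ω) = A. In other words, the inverse c-Cayley transform maps the quadratic Lie group back into its Lie algebra and is a right inverse of the c-Cayley transform. -/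
open scoped Matrix

/-- The inverse c-Cayley transform maps the quadratic Lie group into the
Lie algebra, and is a right inverse of the c-Cayley transform. -/
theorem inverse_cayley_maps_group_into_algebra
    (n : ℕ) (hn : 1 ≤ n)
    (J : Matrix (Fin n) (Fin n) ℂ) (hJ : IsUnit J)
    (c : ℂ) (hc : c ≠ 0)
    (A : Matrix (Fin n) (Fin n) ℂ) (hAJ : A * J * Aᴴ = J)
    (hA : IsUnit (1 + (c / starRingEnd ℂ c) • A))
    (Ω : Matrix (Fin n) (Fin n) ℂ)
    (hΩ : Ω = (-(1 / starRingEnd ℂ c)) • ((1 + (c / starRingEnd ℂ c) • A)⁻¹ * (1 - A))) :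
    Ω * J + J * Ωᴴ = 0 ∧
      (IsUnit (1 - c • Ω) → (1 - c • Ω)⁻¹ * (1 + (starRingEnd ℂ c) • Ω) = A) := by
  set d : ℂ := starRingEnd ℂ c with hd
  have hd0 : d ≠ 0 := by simpa [hd] using hc
  set B : Matrix (Fin n) (Fin n) ℂ := 1 + (c / d) • A with hB
  have hBdet : IsUnit B.det := (Matrix.isUnit_iff_isUnit_det B).mp hA
  have hBl : B⁻¹ * B = 1 := Matrix.nonsing_inv_mul B hBdet
  have hBr : B * B⁻¹ = 1 := Matrix.mul_nonsing_inv B hBdet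
  have hBHdet : IsUnit (Bᴴ).det := by
    rw [Matrix.det_conjTranspose]; exact hBdet.star
  have hBHl : (Bᴴ)⁻¹ * Bᴴ = 1 := Matrix.nonsing_inv_mul _ hBHdet
  have hBHr : Bᴴ * (Bᴴ)⁻¹ = 1 := Matrix.mul_nonsing_inv _ hBHdet
  have hBH : Bᴴ = 1 + (d / c) • Aᴴ := by
    rw [hB]
    simp [Matrix.conjTranspose_add, Matrix.conjTranspose_smul, hd, map_div₀]
  have hΩH : Ωᴴ = (-(1 / c)) • ((1 - Aᴴ) * (Bᴴ)⁻¹) := by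
    rw [hΩ]
    simp [Matrix.conjTranspose_smul, Matrix.conjTranspose_mul,
      Matrix.conjTranspose_nonsing_inv, hd, map_div₀]
  have hBΩ : B * Ω = (-(1 / d)) • (1 - A) := by
    rw [hΩ, mul_smul_comm, ← mul_assoc, hBr, one_mul]
  have hΩHB : Ωᴴ * Bᴴ = (-(1 / c)) • (1 - Aᴴ) := by
    rw [hΩH, smul_mul_assoc, mul_assoc, hBHl, mul_one]
  have hAJ' : A * (J * Aᴴ) = J := by rw [← mul_assoc]; exact hAJ
  constructor
  · -- Part 1
    have key : B * (Ω * J + J * Ωᴴ) * Bᴴ = 0 := by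
      have expand : B * (Ω * J + J * Ωᴴ) * Bᴴ
          = (B * Ω) * (J * Bᴴ) + (B * J) * (Ωᴴ * Bᴴ) := by
        noncomm_ring
      rw [expand, hBΩ, hΩHB, hBH, hB]
      simp only [mul_add, add_mul, mul_sub, sub_mul, smul_mul_assoc, mul_smul_comm,
        smul_smul, smul_sub, smul_add, one_mul, mul_one, hAJ, hAJ']
      match_scalars <;> field_simp <;> ring
    have e1 : B⁻¹ * (B * (Ω * J + J * Ωᴴ) * Bᴴ) * (Bᴴ)⁻¹ = Ω * J + J * Ωᴴ := by
      simp only [mul_assoc]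
      rw [hBHr, mul_one, ← mul_assoc, hBl, one_mul]
    rw [← e1, key]
    simp
  · -- Part 2
    intro hU
    have hUdet : IsUnit (1 - c • Ω).det := (Matrix.isUnit_iff_isUnit_det _).mp hU
    have claim : B * ((1 - c • Ω) * A) = B * (1 + d • Ω) := by
      have l1 : B * ((1 - c • Ω) * A) = (B - c • (B * Ω)) * A := by
        noncomm_ring
      have l2 : B * (1 + d • Ω) = B + d • (B * Ω) := by
        noncomm_ring
      rw [l1, l2, hBΩ, hB]
      simp only [mul_add, add_mul, mul_sub, sub_mul, smul_mul_assoc, mul_smul_comm,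
        smul_smul, smul_sub, smul_add, one_mul, mul_one]
      match_scalars <;> field_simp <;> ring
    have hEq : (1 - c • Ω) * A = 1 + d • Ω := by
      have := congrArg (fun X => B⁻¹ * X) claim
      simpa [← mul_assoc, hBl] using this
    rw [← hEq, ← mul_assoc, Matrix.nonsing_inv_mul _ hUdet, one_mul]
end

section
/- Let n ≥ 1, let t_0 < t_f, let A : [t_0, t_f] → ℂ^{n×n} be continuous, let Y_0 ∈ GL_n(ℂ), and let Ω : [t_0, t_f] → ℂ^{n×n} be differentiable with I − Ω(t)/2 and I + Ω(t)/2 invertible for all t ∈ [t_0, t_f]. Define Y(t) = (I − Ω(t)/2)^{-1}(I + Ω(t)/2) Y_0. If Y satisfies the differential equation Y'(t) = A(t) Y(t) for all t ∈ [t_0, t_f], then Ω satisfies Ω'(t) = A(t) − (1/2)[Ω(t), A(t)] − (1/4) Ω(t) A(t) Ω(t) for all t ∈ [t_0, t_f]. -/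
/-!
Write `P = 1 - Ω/2` and `Q = 1 + Ω/2`. By the product rule and `(P⁻¹)' = P⁻¹ (Ω'/2) P⁻¹`,
the derivative of `P⁻¹ Q Y₀` is `P⁻¹ (Ω'/2) (P⁻¹ Q + 1) Y₀ = P⁻¹ Ω' P⁻¹ Y₀`, since
`P⁻¹ Q + 1 = P⁻¹ (Q + P) = 2 P⁻¹`. Cancelling the invertible `Y₀` in `Y' = A Y` leaves
`P⁻¹ Ω' P⁻¹ = A P⁻¹ Q`, i.e. `Ω' = P A P⁻¹ Q P = P A Q` because `P` and `Q` commute;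
expanding `(1 - Ω/2) A (1 + Ω/2)` gives the Cayley equation.
-/

open scoped Matrix

attribute [local instance] Matrix.frobeniusNormedAddCommGroup Matrix.frobeniusNormedSpace
  Matrix.frobeniusNormedRing

open scoped Ring

section Derivative

variable {𝕜 : Type*} [NontriviallyNormedField 𝕜] {R : Type*} [NormedRing R]
  [HasSummableGeomSeries R] [NormedAlgebra 𝕜 R] {f w : 𝕜 → R} {f' w' : R} {t : 𝕜}

theorem HasDerivAt.ringInverse (hf : HasDerivAt f f' t) (hft : IsUnit (f t)) :
    HasDerivAt (fun s => (f s)⁻¹ʳ) (-((f t)⁻¹ʳ * f' * (f t)⁻¹ʳ)) t := by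
  have h := hasFDerivAt_ringInverse (𝕜 := 𝕜) hft.unit
  rw [hft.unit_spec] at h
  simpa [Function.comp_def, Ring.inverse_of_isUnit hft] using h.comp_hasDerivAt t hf

theorem HasDerivAt.cayley (hw : HasDerivAt w w' t) (hwt : IsUnit (1 - w t)) :
    HasDerivAt (fun s => (1 - w s)⁻¹ʳ * (1 + w s))
      (2 • ((1 - w t)⁻¹ʳ * w' * (1 - w t)⁻¹ʳ)) t := by
  refine (((hw.const_sub 1).ringInverse hwt).mul (hw.const_add 1)).congr_deriv ?_
  set P := 1 - w t
  have hsum : P⁻¹ʳ * (1 + w t) + 1 = 2 • P⁻¹ʳ := calc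
    _ = P⁻¹ʳ * (1 + w t + P) := by rw [mul_add _ (1 + w t), Ring.inverse_mul_cancel _ hwt]
    _ = P⁻¹ʳ * 2 • 1 := by congr 1; simp only [P]; abel
    _ = 2 • P⁻¹ʳ := by rw [mul_smul_comm, mul_one]
  calc _ = P⁻¹ʳ * w' * (P⁻¹ʳ * (1 + w t) + 1) := by noncomm_ring
    _ = _ := by rw [hsum, mul_smul_comm]

end Derivative

theorem Commute.ringInverse_mul_mul_ringInverse_eq_iff {M : Type*} [MonoidWithZero M]
    {P Q X A : M} (hPQ : Commute P Q) (hP : IsUnit P) :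
    P⁻¹ʳ * X * P⁻¹ʳ = A * (P⁻¹ʳ * Q) ↔ X = P * A * Q := by
  obtain ⟨u, rfl⟩ := hP
  rw [Ring.inverse_unit, hPQ.units_inv_left.eq, ← mul_assoc, Units.mul_left_inj, mul_assoc,
    Units.inv_mul_eq_iff_eq_mul]

theorem cayley_differential_equation_general
    (n : ℕ)
    (t0 tf : ℝ)
    (A : ℝ → Matrix (Fin n) (Fin n) ℂ)
    (Y0 : Matrix (Fin n) (Fin n) ℂ) (hY0 : IsUnit Y0)
    (Ω Ω' : ℝ → Matrix (Fin n) (Fin n) ℂ)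
    (hΩdiff : ∀ t ∈ Set.Icc t0 tf, HasDerivAt Ω (Ω' t) t)
    (hinv1 : ∀ t ∈ Set.Icc t0 tf, IsUnit (1 - (1/2 : ℂ) • Ω t))
    (hY : ∀ t ∈ Set.Icc t0 tf,
      HasDerivAt (fun s => (1 - (1/2 : ℂ) • Ω s)⁻¹ * (1 + (1/2 : ℂ) • Ω s) * Y0)
        (A t * ((1 - (1/2 : ℂ) • Ω t)⁻¹ * (1 + (1/2 : ℂ) • Ω t) * Y0)) t) :
    ∀ t ∈ Set.Icc t0 tf,
      Ω' t = A t - (1/2 : ℂ) • (Ω t * A t - A t * Ω t)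
        - (1/4 : ℂ) • (Ω t * A t * Ω t) := by
  intro t ht
  let : NormedAlgebra ℝ (Matrix (Fin n) (Fin n) ℂ) := Matrix.frobeniusNormedAlgebra
  have hw : HasDerivAt (fun s => (1/2 : ℂ) • Ω s) ((1/2 : ℂ) • Ω' t) t :=
    (hΩdiff t ht).const_smul (1/2 : ℂ)
  have hYt := hY t ht
  simp only [Matrix.nonsing_inv_eq_ringInverse] at hYt
  have hderiv := ((hw.cayley (hinv1 t ht)).mul_const Y0).unique hYt
  set P := 1 - (1/2 : ℂ) • Ω t
  set Q := 1 + (1/2 : ℂ) • Ω t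
  have hP : IsUnit P := hinv1 t ht
  have hPQ : Commute P Q :=
    (Commute.one_left Q).sub_left ((Commute.one_right _).add_right (Commute.refl _))
  have hPΩ' : P⁻¹ʳ * Ω' t * P⁻¹ʳ = A t * (P⁻¹ʳ * Q) := by
    rw [← hY0.mul_left_inj, mul_assoc (A t), ← hderiv]
    congr 1
    simp only [mul_smul_comm, smul_mul_assoc]
    module
  rw [(hPQ.ringInverse_mul_mul_ringInverse_eq_iff hP).1 hPΩ']
  simp only [P, Q, sub_mul, mul_add, one_mul, mul_one, smul_mul_assoc, mul_smul_comm]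
  module

/-- If `Y(t) = Cay(Ω(t)) Y₀` solves `Y' = A(t) Y`, then `Ω` solves the Cayley
differential equation `Ω' = A − (1/2)[Ω, A] − (1/4) Ω A Ω`. -/
theorem cayley_differential_equation
    (n : ℕ) (hn : 1 ≤ n)
    (t0 tf : ℝ) (htt : t0 < tf)
    (A : ℝ → Matrix (Fin n) (Fin n) ℂ) (hA : ContinuousOn A (Set.Icc t0 tf))
    (Y0 : Matrix (Fin n) (Fin n) ℂ) (hY0 : IsUnit Y0)
    (Ω Ω' : ℝ → Matrix (Fin n) (Fin n) ℂ)
    (hΩdiff : ∀ t ∈ Set.Icc t0 tf, HasDerivAt Ω (Ω' t) t)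
    (hinv1 : ∀ t ∈ Set.Icc t0 tf, IsUnit (1 - (1/2 : ℂ) • Ω t))
    (hinv2 : ∀ t ∈ Set.Icc t0 tf, IsUnit (1 + (1/2 : ℂ) • Ω t))
    (hY : ∀ t ∈ Set.Icc t0 tf,
      HasDerivAt (fun s => (1 - (1/2 : ℂ) • Ω s)⁻¹ * (1 + (1/2 : ℂ) • Ω s) * Y0)
        (A t * ((1 - (1/2 : ℂ) • Ω t)⁻¹ * (1 + (1/2 : ℂ) • Ω t) * Y0)) t) :
    ∀ t ∈ Set.Icc t0 tf,
      Ω' t = A t - (1/2 : ℂ) • (Ω t * A t - A t * Ω t)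
        - (1/4 : ℂ) • (Ω t * A t * Ω t) :=
  cayley_differential_equation_general n t0 tf A Y0 hY0 Ω Ω' hΩdiff hinv1 hY
end

section
/- Let n ≥ 1 and let J ∈ GL_n(ℂ). If Ω, A ∈ ℂ^{n×n} both satisfy the Lie algebra condition (Ω J + J Ω* = 0 and A J + J A* = 0), then the matrix A − (1/2)[Ω, A] − (1/4) Ω A Ω also satisfies this condition, i.e. (A − (1/2)[Ω,A] − (1/4)ΩAΩ) J + J (A − (1/2)[Ω,A] − (1/4)ΩAΩ)* = 0. Hence the right-hand side of the Cayley differential equation is tangent to the Lie algebra 𝔤. -/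
open scoped Matrix

/-- The right-hand side of the Cayley differential equation is tangent to the
Lie algebra `𝔤 = {Ω : Ω J + J Ωᴴ = 0}` of the quadratic Lie group. -/
theorem cayley_rhs_mem_lie_algebra
    (n : ℕ) (hn : 1 ≤ n)
    (J : Matrix (Fin n) (Fin n) ℂ) (hJ : IsUnit J)
    (Ω A : Matrix (Fin n) (Fin n) ℂ)
    (hΩ : Ω * J + J * Ωᴴ = 0) (hA : A * J + J * Aᴴ = 0) :
    (A - (1/2 : ℂ) • (Ω * A - A * Ω) - (1/4 : ℂ) • (Ω * A * Ω)) * J +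
      J * (A - (1/2 : ℂ) • (Ω * A - A * Ω) - (1/4 : ℂ) • (Ω * A * Ω))ᴴ = 0 := by
  have hΩ' : J * Ωᴴ = -(Ω * J) := eq_neg_of_add_eq_zero_right hΩ
  have hA' : J * Aᴴ = -(A * J) := eq_neg_of_add_eq_zero_right hA
  simp only [Matrix.conjTranspose_sub, Matrix.conjTranspose_smul, Matrix.conjTranspose_mul,
    mul_sub, sub_mul, Matrix.mul_smul, Matrix.smul_mul, ← mul_assoc, hΩ', hA',
    neg_mul, mul_neg, smul_neg]
  have e1 : A * J * Ωᴴ = -(A * Ω * J) := by rw [mul_assoc, hΩ', mul_neg, mul_assoc]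
  have e2 : Ω * J * Aᴴ = -(Ω * A * J) := by rw [mul_assoc, hA', mul_neg, mul_assoc]
  have e3 : Ω * J * Aᴴ * Ωᴴ = Ω * A * Ω * J := by
    rw [e2, neg_mul, mul_assoc, hΩ', mul_neg, neg_neg, ← mul_assoc]
  rw [e1, e2, show -(Ω * A * J) * Ωᴴ = Ω * A * Ω * J by rw [← e2, ← e3]]
  have c2 : star (1/2 : ℂ) = 1/2 := by norm_num
  have c4 : star (1/4 : ℂ) = 1/4 := by norm_num
  rw [c2, c4]
  module
end

section
/- Let n ≥ 1, let A : ℝ → ℂ^{n×n} be infinitely differentiable, let Y_0 ∈ GL_n(ℂ), and let Y : ℝ → ℂ^{n×n} be differentiable with Y'(t) = A(t)Y(t) and Y(0) = Y_0. Define the truncated Cayley–Magnus expansion Ω̂(t) = ∫_0^t A(ξ) dξ − (1/2)∫_0^t ∫_0^{ξ_1} [A(ξ_2), A(ξ_1)] dξ_2 dξ_1 + (1/4)∫_0^t ∫_0^{ξ_1} ∫_0^{ξ_2} [[A(ξ_3), A(ξ_2)], A(ξ_1)] dξ_3 dξ_2 dξ_1 − (1/4)∫_0^t (∫_0^{ξ_1}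 A(ξ_2) dξ_2) A(ξ_1) (∫_0^{ξ_1} A(ξ_2) dξ_2) dξ_1. Then there exist constants C > 0 and δ > 0 such that for all 0 < t < δ, the matrix I − Ω̂(t)/2 is invertible and ‖Y(t) − (I − Ω̂(t)/2)^{-1}(I + Ω̂(t)/2) Y_0‖ ≤ C t⁴, i.e. truncating the Cayley–Magnus expansion after three terms yields a third-order approximation. -/
open scoped Matrix

attribute [local instance] Matrix.frobeniusNormedAddCommGroup Matrix.frobeniusNormedSpace
  Matrix.frobeniusNormedRing

set_option maxHeartbeats 1600000

noncomputable local instance (n : ℕ) : NormedAlgebra ℝ (Matrix (Fin n) (Fin n) ℂ) where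
  norm_smul_le r x := norm_smul_le r x

namespace CM

open intervalIntegral Set

variable {n : ℕ}

lemma rsmul (r : ℝ) (x : Matrix (Fin n) (Fin n) ℂ) : r • x = (r : ℂ) • x := by
  ext i j
  simp [Matrix.smul_apply, Complex.real_smul]

/-- FTC for continuous integrands. -/
lemma ftc {f : ℝ → Matrix (Fin n) (Fin n) ℂ} (hf : Continuous f) (t : ℝ) :
    HasDerivAt (fun u => ∫ s in (0:ℝ)..u, f s) (f t) t :=
  (hf.integral_hasStrictDerivAt 0 t).hasDerivAt

lemma ftc_cont {f : ℝ → Matrix (Fin n) (Fin n) ℂ} (hf : Continuous f) :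
    Continuous (fun u => ∫ s in (0:ℝ)..u, f s) := by
  have : Differentiable ℝ (fun u => ∫ s in (0:ℝ)..u, f s) :=
    fun t => (ftc hf t).differentiableAt
  exact this.continuous

/-- pull a constant right-multiplication out of an interval integral -/
lemma integral_mul_const {f : ℝ → Matrix (Fin n) (Fin n) ℂ} (hf : Continuous f)
    (c : Matrix (Fin n) (Fin n) ℂ) (a b : ℝ) :
    (∫ s in a..b, f s * c) = (∫ s in a..b, f s) * c := by
  have := ((ContinuousLinearMap.mul ℝ (Matrix (Fin n) (Fin n) ℂ)).flip c).intervalIntegral_comp_comm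
    (hf.intervalIntegrable (μ := MeasureTheory.volume) a b)
  simpa using this

lemma integral_const_mul {f : ℝ → Matrix (Fin n) (Fin n) ℂ} (hf : Continuous f)
    (c : Matrix (Fin n) (Fin n) ℂ) (a b : ℝ) :
    (∫ s in a..b, c * f s) = c * (∫ s in a..b, f s) := by
  have := (ContinuousLinearMap.mul ℝ (Matrix (Fin n) (Fin n) ℂ) c).intervalIntegral_comp_comm
    (hf.intervalIntegrable (μ := MeasureTheory.volume) a b)
  simpa using this

lemma integral_comm_const {f : ℝ → Matrix (Fin n) (Fin n) ℂ} (hf : Continuous f)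
    (c : Matrix (Fin n) (Fin n) ℂ) (a b : ℝ) :
    (∫ s in a..b, (f s * c - c * f s)) = (∫ s in a..b, f s) * c - c * (∫ s in a..b, f s) := by
  rw [intervalIntegral.integral_sub (f := fun s => f s * c) (g := fun s => c * f s)
    ((hf.mul continuous_const : Continuous fun s => f s * c).intervalIntegrable _ _)
    ((continuous_const.mul hf : Continuous fun s => c * f s).intervalIntegrable _ _),
    integral_mul_const hf,
    integral_const_mul hf]

noncomputable def S1 (A : ℝ → Matrix (Fin n) (Fin n) ℂ) (t : ℝ) : Matrix (Fin n) (Fin n) ℂ :=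
  ∫ s in (0:ℝ)..t, A s
noncomputable def W (A : ℝ → Matrix (Fin n) (Fin n) ℂ) (t : ℝ) : Matrix (Fin n) (Fin n) ℂ :=
  ∫ s in (0:ℝ)..t, (S1 A s * A s - A s * S1 A s)
noncomputable def V (A : ℝ → Matrix (Fin n) (Fin n) ℂ) (t : ℝ) : Matrix (Fin n) (Fin n) ℂ :=
  ∫ s in (0:ℝ)..t, S1 A s * A s * S1 A s
noncomputable def U (A : ℝ → Matrix (Fin n) (Fin n) ℂ) (t : ℝ) : Matrix (Fin n) (Fin n) ℂ :=
  ∫ s in (0:ℝ)..t, (W A s * A s - A s * W A s)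
noncomputable def S2 (A : ℝ → Matrix (Fin n) (Fin n) ℂ) (t : ℝ) : Matrix (Fin n) (Fin n) ℂ :=
  ∫ s in (0:ℝ)..t, A s * S1 A s
noncomputable def S3 (A : ℝ → Matrix (Fin n) (Fin n) ℂ) (t : ℝ) : Matrix (Fin n) (Fin n) ℂ :=
  ∫ s in (0:ℝ)..t, A s * S2 A s

variable {A : ℝ → Matrix (Fin n) (Fin n) ℂ} (hA : Continuous A)
include hA

lemma hdS1 (t : ℝ) : HasDerivAt (S1 A) (A t) t := ftc hA t
lemma contS1 : Continuous (S1 A) := ftc_cont hA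
lemma hdW (t : ℝ) : HasDerivAt (W A) (S1 A t * A t - A t * S1 A t) t :=
  ftc (((contS1 hA).mul hA).sub (hA.mul (contS1 hA))) t
lemma contW : Continuous (W A) := ftc_cont (((contS1 hA).mul hA).sub (hA.mul (contS1 hA)))
lemma hdV (t : ℝ) : HasDerivAt (V A) (S1 A t * A t * S1 A t) t :=
  ftc (((contS1 hA).mul hA).mul (contS1 hA)) t
lemma hdU (t : ℝ) : HasDerivAt (U A) (W A t * A t - A t * W A t) t :=
  ftc (((contW hA).mul hA).sub (hA.mul (contW hA))) t
lemma hdS2 (t : ℝ) : HasDerivAt (S2 A) (A t * S1 A t) t := ftc (hA.mul (contS1 hA)) t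
lemma contS2 : Continuous (S2 A) := ftc_cont (hA.mul (contS1 hA))
lemma hdS3 (t : ℝ) : HasDerivAt (S3 A) (A t * S2 A t) t := ftc (hA.mul (contS2 hA)) t

/-- Exact identity 1 : S1² = W + 2 S2. -/
lemma id1 (t : ℝ) : S1 A t * S1 A t = W A t + (2:ℝ) • S2 A t := by
  have key : ∀ s : ℝ, (fun u => S1 A u * S1 A u - W A u - (2:ℝ) • S2 A u) s
      = (fun u => S1 A u * S1 A u - W A u - (2:ℝ) • S2 A u) 0 := by
    intro s
    refine is_const_of_deriv_eq_zero (𝕜 := ℝ)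
      (fun u => ((((hdS1 hA u).mul (hdS1 hA u)).sub (hdW hA u)).sub
        ((hdS2 hA u).const_smul (2:ℝ))).differentiableAt) (fun u => ?_) s 0
    have h : HasDerivAt (fun u => S1 A u * S1 A u - W A u - (2:ℝ) • S2 A u)
        ((A u * S1 A u + S1 A u * A u) - (S1 A u * A u - A u * S1 A u)
          - (2:ℝ) • (A u * S1 A u)) u :=
      (((hdS1 hA u).mul (hdS1 hA u)).sub (hdW hA u)).sub ((hdS2 hA u).const_smul (2:ℝ))
    have hz : (A u * S1 A u + S1 A u * A u) - (S1 A u * A u - A u * S1 A u)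
        - (2:ℝ) • (A u * S1 A u) = 0 := by
      rw [two_smul]; abel
    exact h.deriv.trans hz
  have h0 := key t
  simp only [S1, W, S2, intervalIntegral.integral_same, zero_mul, smul_zero, sub_zero,
    zero_sub, neg_zero, mul_zero, sub_self] at h0
  rw [sub_sub] at h0
  exact sub_eq_zero.mp h0

/-- Exact identity 2 : U - V - (S1*W + W*S1) + S1³ = 4 S3. -/
lemma id2 (t : ℝ) :
    U A t - V A t - (S1 A t * W A t + W A t * S1 A t) + S1 A t * S1 A t * S1 A t
      = (4:ℝ) • S3 A t := by
  set g : ℝ → Matrix (Fin n) (Fin n) ℂ := fun u =>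
    U A u - V A u - (S1 A u * W A u + W A u * S1 A u) + S1 A u * S1 A u * S1 A u
      - (4:ℝ) • S3 A u with hg
  have hd : ∀ u : ℝ, HasDerivAt g
      ((W A u * A u - A u * W A u) - S1 A u * A u * S1 A u
        - ((A u * W A u + S1 A u * (S1 A u * A u - A u * S1 A u))
          + ((S1 A u * A u - A u * S1 A u) * S1 A u + W A u * A u))
        + ((A u * S1 A u + S1 A u * A u) * S1 A u + S1 A u * S1 A u * A u)
        - (4:ℝ) • (A u * S2 A u)) u := fun u =>
    (((((hdU hA u).sub (hdV hA u)).sub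
      (((hdS1 hA u).mul (hdW hA u)).add ((hdW hA u).mul (hdS1 hA u)))).add
      (((hdS1 hA u).mul (hdS1 hA u)).mul (hdS1 hA u))).sub
      ((hdS3 hA u).const_smul (4:ℝ)))
  have key : ∀ s : ℝ, g s = g 0 := by
    intro s
    refine is_const_of_deriv_eq_zero (𝕜 := ℝ) (fun u => (hd u).differentiableAt)
      (fun u => ?_) s 0
    have hz : (W A u * A u - A u * W A u) - S1 A u * A u * S1 A u
        - ((A u * W A u + S1 A u * (S1 A u * A u - A u * S1 A u))
          + ((S1 A u * A u - A u * S1 A u) * S1 A u + W A u * A u))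
        + ((A u * S1 A u + S1 A u * A u) * S1 A u + S1 A u * S1 A u * A u)
        - (4:ℝ) • (A u * S2 A u)
        = (2:ℝ) • (A u * (S1 A u * S1 A u - (W A u + (2:ℝ) • S2 A u))) := by
      simp only [mul_sub, sub_mul, mul_add, add_mul, smul_sub, smul_add, smul_smul,
        mul_smul_comm, smul_mul_assoc, mul_assoc]
      module
    rw [(hd u).deriv, hz, id1 hA u, sub_self, mul_zero, smul_zero]
  have h0 := key t
  simp only [hg, S1, W, U, V, S3, intervalIntegral.integral_same, zero_mul, smul_zero,
    sub_zero, zero_sub, neg_zero, mul_zero, zero_add, add_zero, zero_smul, sub_self] at h0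
  rw [sub_eq_zero] at h0
  exact h0

end CM

namespace CM

variable {n : ℕ}

/-- `Bnd f k` : `‖f t‖ ≤ c t^k` on `[0,1]`. -/
def Bnd (f : ℝ → Matrix (Fin n) (Fin n) ℂ) (k : ℕ) : Prop :=
  ∃ c : ℝ, 0 ≤ c ∧ ∀ t : ℝ, 0 ≤ t → t ≤ 1 → ‖f t‖ ≤ c * t ^ k

variable {f g : ℝ → Matrix (Fin n) (Fin n) ℂ} {k l : ℕ}

lemma Bnd.add (hf : Bnd f k) (hg : Bnd g k) : Bnd (fun t => f t + g t) k := by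
  obtain ⟨c, hc, hcb⟩ := hf
  obtain ⟨d, hd, hdb⟩ := hg
  refine ⟨c + d, by positivity, fun t ht0 ht1 => ?_⟩
  calc ‖f t + g t‖ ≤ ‖f t‖ + ‖g t‖ := norm_add_le _ _
    _ ≤ c * t ^ k + d * t ^ k := add_le_add (hcb t ht0 ht1) (hdb t ht0 ht1)
    _ = (c + d) * t ^ k := (add_mul c d _).symm

lemma Bnd.neg (hf : Bnd f k) : Bnd (fun t => -(f t)) k := by
  obtain ⟨c, hc, hcb⟩ := hf
  exact ⟨c, hc, fun t ht0 ht1 => by simpa using hcb t ht0 ht1⟩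

lemma Bnd.sub (hf : Bnd f k) (hg : Bnd g k) : Bnd (fun t => f t - g t) k := by
  have := hf.add hg.neg
  simpa [sub_eq_add_neg] using this

lemma Bnd.mul (hf : Bnd f k) (hg : Bnd g l) : Bnd (fun t => f t * g t) (k + l) := by
  obtain ⟨c, hc, hcb⟩ := hf
  obtain ⟨d, hd, hdb⟩ := hg
  refine ⟨c * d, by positivity, fun t ht0 ht1 => ?_⟩
  calc ‖f t * g t‖ ≤ ‖f t‖ * ‖g t‖ := norm_mul_le _ _
    _ ≤ (c * t ^ k) * (d * t ^ l) :=
        mul_le_mul (hcb t ht0 ht1) (hdb t ht0 ht1) (norm_nonneg _) (by positivity)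
    _ = c * d * t ^ (k + l) := by rw [pow_add]; ring

lemma Bnd.smul (hf : Bnd f k) (z : ℂ) : Bnd (fun t => z • f t) k := by
  obtain ⟨c, hc, hcb⟩ := hf
  refine ⟨‖z‖ * c, by positivity, fun t ht0 ht1 => ?_⟩
  rw [norm_smul, mul_assoc]
  exact mul_le_mul_of_nonneg_left (hcb t ht0 ht1) (norm_nonneg _)

lemma Bnd.mono (hf : Bnd f l) (hkl : k ≤ l) : Bnd f k := by
  obtain ⟨c, hc, hcb⟩ := hf
  refine ⟨c, hc, fun t ht0 ht1 => (hcb t ht0 ht1).trans ?_⟩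
  exact mul_le_mul_of_nonneg_left (pow_le_pow_of_le_one ht0 ht1 hkl) hc

lemma Bnd.congr (hf : Bnd f k) (h : ∀ t, g t = f t) : Bnd g k := by
  obtain ⟨c, hc, hcb⟩ := hf
  exact ⟨c, hc, fun t ht0 ht1 => by rw [h t]; exact hcb t ht0 ht1⟩

lemma bnd_of_continuous (hf : Continuous f) : Bnd f 0 := by
  obtain ⟨c, hc⟩ := (isCompact_Icc (a := (0:ℝ)) (b := 1)).exists_bound_of_continuousOn
    hf.continuousOn
  refine ⟨max c 0, le_max_right _ _, fun t ht0 ht1 => ?_⟩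
  calc ‖f t‖ ≤ c := hc t ⟨ht0, ht1⟩
    _ ≤ max c 0 := le_max_left _ _
    _ = max c 0 * t ^ 0 := by simp

lemma Bnd.of_deriv {f' : ℝ → Matrix (Fin n) (Fin n) ℂ}
    (hd : ∀ t, HasDerivAt f (f' t) t) (h0 : f 0 = 0) (hf' : Bnd f' k) : Bnd f (k + 1) := by
  obtain ⟨c, hc, hcb⟩ := hf'
  refine ⟨c, hc, fun t ht0 ht1 => ?_⟩
  have key := norm_image_sub_le_of_norm_deriv_le_segment' (a := 0) (b := t) (f := f) (f' := f')
    (C := c * t ^ k) (fun x hx => (hd x).hasDerivWithinAt)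
    (fun x hx => (hcb x hx.1 (hx.2.le.trans ht1)).trans
      (mul_le_mul_of_nonneg_left (pow_le_pow_left₀ hx.1 hx.2.le k) hc))
    t (Set.right_mem_Icc.mpr ht0)
  rw [h0, sub_zero, sub_zero] at key
  calc ‖f t‖ ≤ c * t ^ k * t := key
    _ = c * t ^ (k + 1) := by rw [pow_succ]; ring

lemma Bnd.integral (hf : Continuous f) (hb : Bnd f k) :
    Bnd (fun t => ∫ s in (0:ℝ)..t, f s) (k + 1) :=
  Bnd.of_deriv (ftc hf) (by simp) hb

noncomputable def P2 (A : ℝ → Matrix (Fin n) (Fin n) ℂ) (t : ℝ) : Matrix (Fin n) (Fin n) ℂ :=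
  -((1/2 : ℂ) • W A t)
noncomputable def P3 (A : ℝ → Matrix (Fin n) (Fin n) ℂ) (t : ℝ) : Matrix (Fin n) (Fin n) ℂ :=
  (1/4 : ℂ) • U A t - (1/4 : ℂ) • V A t
noncomputable def Pn (A : ℝ → Matrix (Fin n) (Fin n) ℂ) (t : ℝ) : Matrix (Fin n) (Fin n) ℂ :=
  P2 A t + P3 A t
noncomputable def Om (A : ℝ → Matrix (Fin n) (Fin n) ℂ) (t : ℝ) : Matrix (Fin n) (Fin n) ℂ :=
  S1 A t + P2 A t + P3 A t

section omegaeq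
variable {A : ℝ → Matrix (Fin n) (Fin n) ℂ} (hA : Continuous A)
include hA

lemma omega_eq (t : ℝ) :
    (∫ ξ in (0:ℝ)..t, A ξ)
      - (1/2 : ℝ) • (∫ ξ1 in (0:ℝ)..t, ∫ ξ2 in (0:ℝ)..ξ1,
          (A ξ2 * A ξ1 - A ξ1 * A ξ2))
      + (1/4 : ℝ) • (∫ ξ1 in (0:ℝ)..t, ∫ ξ2 in (0:ℝ)..ξ1, ∫ ξ3 in (0:ℝ)..ξ2,
          ((A ξ3 * A ξ2 - A ξ2 * A ξ3) * A ξ1 - A ξ1 * (A ξ3 * A ξ2 - A ξ2 * A ξ3)))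
      - (1/4 : ℝ) • (∫ ξ1 in (0:ℝ)..t,
          (∫ ξ2 in (0:ℝ)..ξ1, A ξ2) * A ξ1 * (∫ ξ2 in (0:ℝ)..ξ1, A ξ2))
    = Om A t := by
  have h2 : ∀ s : ℝ, (∫ ξ2 in (0:ℝ)..s, (A ξ2 * A s - A s * A ξ2))
      = S1 A s * A s - A s * S1 A s := fun s => integral_comm_const hA (A s) 0 s
  have hWt : (∫ ξ1 in (0:ℝ)..t, ∫ ξ2 in (0:ℝ)..ξ1, (A ξ2 * A ξ1 - A ξ1 * A ξ2)) = W A t :=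
    intervalIntegral.integral_congr (fun s _ => h2 s)
  have h3inner : ∀ s1 s2 : ℝ, (∫ ξ3 in (0:ℝ)..s2,
      ((A ξ3 * A s2 - A s2 * A ξ3) * A s1 - A s1 * (A ξ3 * A s2 - A s2 * A ξ3)))
      = (S1 A s2 * A s2 - A s2 * S1 A s2) * A s1
        - A s1 * (S1 A s2 * A s2 - A s2 * S1 A s2) := by
    intro s1 s2
    have hc : Continuous (fun ξ3 => A ξ3 * A s2 - A s2 * A ξ3) :=
      (hA.mul continuous_const).sub (continuous_const.mul hA)
    rw [integral_comm_const hc (A s1) 0 s2, h2 s2]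
  have h3mid : ∀ s1 : ℝ, (∫ ξ2 in (0:ℝ)..s1, ∫ ξ3 in (0:ℝ)..ξ2,
      ((A ξ3 * A ξ2 - A ξ2 * A ξ3) * A s1 - A s1 * (A ξ3 * A ξ2 - A ξ2 * A ξ3)))
      = W A s1 * A s1 - A s1 * W A s1 := by
    intro s1
    rw [intervalIntegral.integral_congr (fun s2 _ => h3inner s1 s2)]
    exact integral_comm_const (((contS1 hA).mul hA).sub (hA.mul (contS1 hA))) (A s1) 0 s1
  have hUt : (∫ ξ1 in (0:ℝ)..t, ∫ ξ2 in (0:ℝ)..ξ1, ∫ ξ3 in (0:ℝ)..ξ2,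
      ((A ξ3 * A ξ2 - A ξ2 * A ξ3) * A ξ1 - A ξ1 * (A ξ3 * A ξ2 - A ξ2 * A ξ3))) = U A t :=
    intervalIntegral.integral_congr (fun s _ => h3mid s)
  have hVt : (∫ ξ1 in (0:ℝ)..t,
      (∫ ξ2 in (0:ℝ)..ξ1, A ξ2) * A ξ1 * (∫ ξ2 in (0:ℝ)..ξ1, A ξ2)) = V A t := rfl
  rw [hWt, hUt, hVt, rsmul (1/2 : ℝ), rsmul (1/4 : ℝ), rsmul (1/4 : ℝ)]
  have e1 : (((1/2 : ℝ) : ℂ)) = (1/2 : ℂ) := by norm_num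
  have e2 : (((1/4 : ℝ) : ℂ)) = (1/4 : ℂ) := by norm_num
  rw [e1, e2]
  show S1 A t - (1/2 : ℂ) • W A t + (1/4 : ℂ) • U A t - (1/4 : ℂ) • V A t = _
  rw [Om, P2, P3]
  abel

end omegaeq

section keyalg
variable {A : ℝ → Matrix (Fin n) (Fin n) ℂ} (hA : Continuous A)
include hA

lemma hS2eq (t : ℝ) : S2 A t = (1/2 : ℂ) • (S1 A t * S1 A t - W A t) := by
  rw [id1 hA t, rsmul (2:ℝ)]
  rw [show (((2:ℝ)):ℂ) = (2:ℂ) by norm_num]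
  rw [add_sub_cancel_left, smul_smul]
  norm_num

lemma hS3eq (t : ℝ) : S3 A t = (1/4 : ℂ) •
    (U A t - V A t - (S1 A t * W A t + W A t * S1 A t) + S1 A t * S1 A t * S1 A t) := by
  rw [id2 hA t, rsmul (4:ℝ)]
  rw [show (((4:ℝ)):ℂ) = (4:ℂ) by norm_num]
  rw [smul_smul]
  norm_num

lemma key_alg (t : ℝ) :
    (1 + Om A t + (1/2 : ℂ) • (Om A t * Om A t) + (1/4 : ℂ) • (Om A t * Om A t * Om A t))
      - (1 + S1 A t + S2 A t + S3 A t)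
    = (1/2 : ℂ) • (S1 A t * P3 A t + P3 A t * S1 A t + Pn A t * Pn A t)
      + (1/4 : ℂ) • (Om A t * Om A t * Pn A t + Om A t * Pn A t * S1 A t
          + Pn A t * S1 A t * S1 A t) := by
  rw [hS2eq hA t, hS3eq hA t]
  simp only [Om, Pn, P2, P3, mul_add, add_mul, mul_sub, sub_mul, smul_add, smul_sub,
    smul_smul, mul_smul_comm, smul_mul_assoc, mul_assoc, neg_mul, mul_neg, smul_neg,
    neg_neg, neg_add, neg_sub]
  module

end keyalg

end CM

/-- Truncating the Cayley–Magnus expansion after three terms yields a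
third-order approximation of the solution of `Y' = A(t) Y`. -/
theorem truncated_cayley_magnus_third_order
    (n : ℕ) (hn : 1 ≤ n)
    (A : ℝ → Matrix (Fin n) (Fin n) ℂ) (hA : ContDiff ℝ (⊤ : ℕ∞) A)
    (Y0 : Matrix (Fin n) (Fin n) ℂ) (hY0 : IsUnit Y0)
    (Y : ℝ → Matrix (Fin n) (Fin n) ℂ)
    (hY : ∀ t : ℝ, HasDerivAt Y (A t * Y t) t) (hYinit : Y 0 = Y0)
    (Ωh : ℝ → Matrix (Fin n) (Fin n) ℂ)
    (hΩ : ∀ t : ℝ, Ωh t =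
      (∫ ξ in (0:ℝ)..t, A ξ)
      - (1/2 : ℝ) • (∫ ξ1 in (0:ℝ)..t, ∫ ξ2 in (0:ℝ)..ξ1,
          (A ξ2 * A ξ1 - A ξ1 * A ξ2))
      + (1/4 : ℝ) • (∫ ξ1 in (0:ℝ)..t, ∫ ξ2 in (0:ℝ)..ξ1, ∫ ξ3 in (0:ℝ)..ξ2,
          ((A ξ3 * A ξ2 - A ξ2 * A ξ3) * A ξ1 - A ξ1 * (A ξ3 * A ξ2 - A ξ2 * A ξ3)))
      - (1/4 : ℝ) • (∫ ξ1 in (0:ℝ)..t,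
          (∫ ξ2 in (0:ℝ)..ξ1, A ξ2) * A ξ1 * (∫ ξ2 in (0:ℝ)..ξ1, A ξ2))) :
    ∃ C > 0, ∃ δ > 0, ∀ t : ℝ, 0 < t → t < δ →
      IsUnit (1 - (1/2 : ℂ) • Ωh t) ∧
      ‖Y t - (1 - (1/2 : ℂ) • Ωh t)⁻¹ * (1 + (1/2 : ℂ) • Ωh t) * Y0‖ ≤ C * t^4 := by
  classical
  have hAc : Continuous A := hA.continuous
  have hΩ' : ∀ t : ℝ, Ωh t = CM.Om A t := fun t => (hΩ t).trans (CM.omega_eq hAc t)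
  -- polynomial bounds
  have hBA : CM.Bnd A 0 := CM.bnd_of_continuous hAc
  have hBS1 : CM.Bnd (CM.S1 A) 1 := CM.Bnd.integral hAc hBA
  have hBW : CM.Bnd (CM.W A) 2 :=
    CM.Bnd.integral (((CM.contS1 hAc).mul hAc).sub (hAc.mul (CM.contS1 hAc)))
      ((hBS1.mul hBA).sub (hBA.mul hBS1))
  have hBS2 : CM.Bnd (CM.S2 A) 2 := CM.Bnd.integral (hAc.mul (CM.contS1 hAc)) (hBA.mul hBS1)
  have hBV : CM.Bnd (CM.V A) 3 :=
    CM.Bnd.integral (((CM.contS1 hAc).mul hAc).mul (CM.contS1 hAc)) ((hBS1.mul hBA).mul hBS1)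
  have hBU : CM.Bnd (CM.U A) 3 :=
    CM.Bnd.integral (((CM.contW hAc).mul hAc).sub (hAc.mul (CM.contW hAc)))
      ((hBW.mul hBA).sub (hBA.mul hBW))
  have hBS3 : CM.Bnd (CM.S3 A) 3 := CM.Bnd.integral (hAc.mul (CM.contS2 hAc)) (hBA.mul hBS2)
  have hBP2 : CM.Bnd (CM.P2 A) 2 := CM.Bnd.congr ((hBW.smul (1/2)).neg) (fun t => rfl)
  have hBP3 : CM.Bnd (CM.P3 A) 3 :=
    CM.Bnd.congr ((hBU.smul (1/4)).sub (hBV.smul (1/4))) (fun t => rfl)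
  have hBPn : CM.Bnd (CM.Pn A) 2 :=
    CM.Bnd.congr (hBP2.add (hBP3.mono (by norm_num))) (fun t => rfl)
  have hBOm : CM.Bnd (CM.Om A) 1 :=
    CM.Bnd.congr ((hBS1.add (hBP2.mono (by norm_num))).add (hBP3.mono (by norm_num)))
      (fun t => rfl)
  have hBOm4 : CM.Bnd (fun t => CM.Om A t * CM.Om A t * CM.Om A t * CM.Om A t) 4 :=
    ((hBOm.mul hBOm).mul hBOm).mul hBOm
  -- remainder of the Cayley expansion versus the Picard expansion
  have hBRem : CM.Bnd (fun t =>
      (1 + CM.Om A t + (1/2:ℂ) • (CM.Om A t * CM.Om A t)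
        + (1/4:ℂ) • (CM.Om A t * CM.Om A t * CM.Om A t))
      - (1 + CM.S1 A t + CM.S2 A t + CM.S3 A t)) 4 := by
    refine CM.Bnd.congr ?_ (fun t => CM.key_alg hAc t)
    have e1 : CM.Bnd (fun t => CM.S1 A t * CM.P3 A t + CM.P3 A t * CM.S1 A t
        + CM.Pn A t * CM.Pn A t) 4 :=
      ((hBS1.mul hBP3).add (hBP3.mul hBS1)).add (hBPn.mul hBPn)
    have e2 : CM.Bnd (fun t => CM.Om A t * CM.Om A t * CM.Pn A t
        + CM.Om A t * CM.Pn A t * CM.S1 A t + CM.Pn A t * CM.S1 A t * CM.S1 A t) 4 :=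
      (((hBOm.mul hBOm).mul hBPn).add ((hBOm.mul hBPn).mul hBS1)).add
        ((hBPn.mul hBS1).mul hBS1)
    exact (e1.smul (1/2)).add (e2.smul (1/4))
  -- Picard bounds
  have hYd : Differentiable ℝ Y := fun t => (hY t).differentiableAt
  have hYc : Continuous Y := hYd.continuous
  have hBY : CM.Bnd Y 0 := CM.bnd_of_continuous hYc
  have hdD0 : ∀ t : ℝ, HasDerivAt (fun u => Y u - Y 0) (A t * Y t) t :=
    fun t => (hY t).sub_const _
  have hBD0 : CM.Bnd (fun u => Y u - Y 0) 1 := CM.Bnd.of_deriv hdD0 (by simp) (hBA.mul hBY)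
  have hdD1 : ∀ t : ℝ, HasDerivAt (fun u => Y u - Y 0 - CM.S1 A u * Y 0)
      (A t * (Y t - Y 0)) t := by
    intro t
    have h := (hdD0 t).sub ((CM.hdS1 hAc t).mul_const (Y 0))
    exact h.congr_deriv (by simp only [mul_sub, mul_assoc])
  have hBD1 : CM.Bnd (fun u => Y u - Y 0 - CM.S1 A u * Y 0) 2 :=
    CM.Bnd.of_deriv hdD1 (by simp [CM.S1]) (hBA.mul hBD0)
  have hdD2 : ∀ t : ℝ, HasDerivAt (fun u => Y u - Y 0 - CM.S1 A u * Y 0 - CM.S2 A u * Y 0)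
      (A t * (Y t - Y 0 - CM.S1 A t * Y 0)) t := by
    intro t
    have h := (hdD1 t).sub ((CM.hdS2 hAc t).mul_const (Y 0))
    exact h.congr_deriv (by simp only [mul_sub, mul_assoc])
  have hBD2 : CM.Bnd (fun u => Y u - Y 0 - CM.S1 A u * Y 0 - CM.S2 A u * Y 0) 3 :=
    CM.Bnd.of_deriv hdD2 (by simp [CM.S1, CM.S2]) (hBA.mul hBD1)
  have hdD3 : ∀ t : ℝ, HasDerivAt
      (fun u => Y u - Y 0 - CM.S1 A u * Y 0 - CM.S2 A u * Y 0 - CM.S3 A u * Y 0)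
      (A t * (Y t - Y 0 - CM.S1 A t * Y 0 - CM.S2 A t * Y 0)) t := by
    intro t
    have h := (hdD2 t).sub ((CM.hdS3 hAc t).mul_const (Y 0))
    exact h.congr_deriv (by simp only [mul_sub, mul_assoc])
  have hBD3 : CM.Bnd
      (fun u => Y u - Y 0 - CM.S1 A u * Y 0 - CM.S2 A u * Y 0 - CM.S3 A u * Y 0) 4 :=
    CM.Bnd.of_deriv hdD3 (by simp [CM.S1, CM.S2, CM.S3]) (hBA.mul hBD2)
  -- extract constants
  obtain ⟨c1, hc1, hb1⟩ := hBOm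
  obtain ⟨c2, hc2, hb2⟩ := hBRem
  obtain ⟨c3, hc3, hb3⟩ := hBD3
  obtain ⟨c4, hc4, hb4⟩ := hBOm4
  set onen : ℝ := ‖(1 : Matrix (Fin n) (Fin n) ℂ)‖ with honen
  have honen0 : 0 ≤ onen := norm_nonneg _
  refine ⟨c3 + c2 * ‖Y0‖ + 2 * onen * c4 * ‖Y0‖ + 1, by positivity, min 1 (1/(c1+1)),
    lt_min one_pos (by positivity), fun t ht0 htδ => ?_⟩
  have ht1 : t ≤ 1 := le_of_lt (lt_of_lt_of_le htδ (min_le_left _ _))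
  have htc1 : c1 * t < 1 := by
    have h1 : t < 1/(c1+1) := lt_of_lt_of_le htδ (min_le_right _ _)
    have h2 : (c1+1) * t < (c1+1) * (1/(c1+1)) :=
      mul_lt_mul_of_pos_left h1 (by positivity)
    have h3 : (c1+1) * (1/(c1+1)) = 1 := by field_simp
    nlinarith
  have hOmnorm : ‖CM.Om A t‖ ≤ c1 * t := by
    have := hb1 t ht0.le ht1
    simpa using this
  have hhalf : ‖(1/2 : ℂ)‖ = 1/2 := by norm_num
  rw [hΩ' t]
  set Ω : Matrix (Fin n) (Fin n) ℂ := CM.Om A t with hΩdef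
  set X : Matrix (Fin n) (Fin n) ℂ := (1/2 : ℂ) • Ω with hXdef
  have hXnorm : ‖X‖ ≤ 1/2 := by
    rw [hXdef, norm_smul, hhalf]
    nlinarith [norm_nonneg Ω]
  have hXlt : ‖X‖ < 1 := lt_of_le_of_lt hXnorm (by norm_num)
  have hunit : IsUnit (1 - X) := (Units.oneSub X hXlt).isUnit
  refine ⟨hunit, ?_⟩
  have hdet : IsUnit (1 - X).det := (Matrix.isUnit_iff_isUnit_det _).mp hunit
  have hJl : (1 - X)⁻¹ * (1 - X) = 1 := Matrix.nonsing_inv_mul _ hdet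
  have hJr : (1 - X) * (1 - X)⁻¹ = 1 := Matrix.mul_nonsing_inv _ hdet
  set J : Matrix (Fin n) (Fin n) ℂ := (1 - X)⁻¹ with hJdef
  have hJeq : J = 1 + X * J := by
    have h := hJr
    rw [sub_mul, one_mul] at h
    exact eq_add_of_sub_eq h
  have hJnorm : ‖J‖ ≤ 2 * onen := by
    have h1 : ‖J‖ ≤ onen + ‖X‖ * ‖J‖ := by
      calc ‖J‖ = ‖1 + X * J‖ := by rw [← hJeq]
        _ ≤ ‖(1 : Matrix (Fin n) (Fin n) ℂ)‖ + ‖X * J‖ := norm_add_le _ _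
        _ ≤ onen + ‖X‖ * ‖J‖ := by
            rw [honen]
            exact add_le_add_right (norm_mul_le _ _) _
    nlinarith [norm_nonneg J, hXnorm, h1]
  -- the Cayley expansion
  have hmul : (1 - X) * (1 + Ω + (1/2:ℂ) • (Ω * Ω) + (1/4:ℂ) • (Ω * Ω * Ω))
      = (1 + X) - (1/8:ℂ) • (Ω * Ω * Ω * Ω) := by
    rw [hXdef]
    simp only [mul_add, add_mul, mul_sub, sub_mul, smul_add, smul_sub, smul_smul,
      mul_smul_comm, smul_mul_assoc, mul_one, one_mul, mul_assoc]
    module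
  have hcay : J * (1 + X) = (1 + Ω + (1/2:ℂ) • (Ω * Ω) + (1/4:ℂ) • (Ω * Ω * Ω))
      + (1/8:ℂ) • (J * (Ω * Ω * Ω * Ω)) := by
    have h1 : (1 + X) = (1 - X) * (1 + Ω + (1/2:ℂ) • (Ω * Ω) + (1/4:ℂ) • (Ω * Ω * Ω))
        + (1/8:ℂ) • (Ω * Ω * Ω * Ω) := by
      rw [hmul, sub_add_cancel]
    rw [h1, mul_add, ← mul_assoc, hJl, one_mul, mul_smul_comm]
  have hsplit : Y t - J * (1 + X) * Y0
      = (Y t - Y 0 - CM.S1 A t * Y 0 - CM.S2 A t * Y 0 - CM.S3 A t * Y 0)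
        - ((1 + Ω + (1/2:ℂ) • (Ω * Ω) + (1/4:ℂ) • (Ω * Ω * Ω))
            - (1 + CM.S1 A t + CM.S2 A t + CM.S3 A t)) * Y0
        - (1/8:ℂ) • (J * (Ω * Ω * Ω * Ω) * Y0) := by
    rw [hcay, hYinit]
    simp only [add_mul, sub_mul, one_mul, smul_mul_assoc]
    abel
  rw [hsplit]
  have nb1 : ‖Y t - Y 0 - CM.S1 A t * Y 0 - CM.S2 A t * Y 0 - CM.S3 A t * Y 0‖ ≤ c3 * t^4 :=
    hb3 t ht0.le ht1
  have nb2 : ‖((1 + Ω + (1/2:ℂ) • (Ω * Ω) + (1/4:ℂ) • (Ω * Ω * Ω))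
      - (1 + CM.S1 A t + CM.S2 A t + CM.S3 A t)) * Y0‖ ≤ c2 * t^4 * ‖Y0‖ := by
    refine (norm_mul_le _ _).trans (mul_le_mul_of_nonneg_right ?_ (norm_nonneg _))
    exact hb2 t ht0.le ht1
  have nb3 : ‖(1/8:ℂ) • (J * (Ω * Ω * Ω * Ω) * Y0)‖ ≤ (1/8) * (2 * onen * (c4 * t^4) * ‖Y0‖) := by
    rw [norm_smul]
    have h8 : ‖(1/8 : ℂ)‖ = 1/8 := by norm_num
    rw [h8]
    refine mul_le_mul_of_nonneg_left ?_ (by norm_num)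
    calc ‖J * (Ω * Ω * Ω * Ω) * Y0‖ ≤ ‖J * (Ω * Ω * Ω * Ω)‖ * ‖Y0‖ := norm_mul_le _ _
      _ ≤ ‖J‖ * ‖Ω * Ω * Ω * Ω‖ * ‖Y0‖ :=
          mul_le_mul_of_nonneg_right (norm_mul_le _ _) (norm_nonneg _)
      _ ≤ 2 * onen * (c4 * t^4) * ‖Y0‖ := by
          have := hb4 t ht0.le ht1
          have h4 : ‖Ω * Ω * Ω * Ω‖ ≤ c4 * t^4 := this
          have := mul_le_mul hJnorm h4 (norm_nonneg _) (by positivity)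
          exact mul_le_mul_of_nonneg_right this (norm_nonneg _)
  have htp : (0:ℝ) ≤ t^4 := by positivity
  calc ‖_ - _ - _‖ ≤ ‖_ - _‖ + ‖(1/8:ℂ) • (J * (Ω * Ω * Ω * Ω) * Y0)‖ := norm_sub_le _ _
    _ ≤ (‖Y t - Y 0 - CM.S1 A t * Y 0 - CM.S2 A t * Y 0 - CM.S3 A t * Y 0‖
          + ‖((1 + Ω + (1/2:ℂ) • (Ω * Ω) + (1/4:ℂ) • (Ω * Ω * Ω))
            - (1 + CM.S1 A t + CM.S2 A t + CM.S3 A t)) * Y0‖)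
          + ‖(1/8:ℂ) • (J * (Ω * Ω * Ω * Ω) * Y0)‖ :=
        add_le_add_left (norm_sub_le _ _) _
    _ ≤ (c3 * t^4 + c2 * t^4 * ‖Y0‖) + (1/8) * (2 * onen * (c4 * t^4) * ‖Y0‖) :=
        add_le_add (add_le_add nb1 nb2) nb3
    _ ≤ (c3 + c2 * ‖Y0‖ + 2 * onen * c4 * ‖Y0‖ + 1) * t^4 := by
        have h9 : 0 ≤ onen * c4 * ‖Y0‖ * t^4 := by positivity
        nlinarith [h9, htp]
end

section
/- Let n ≥ 1 and let A, B, C ∈ ℂ^{n×n}. For t ∈ ℝ sufficiently small, the matrices I − tA/2, I − tB/2, I − tC/2 and I + P(t) are invertible, where P(t) = Cay(tA)·Cay(tB)·Cay(tC), and the matrix Ω(t) = 2(P(t) − I)(I + P(t))^{-1} satisfies Cay(Ω(t)) = P(t). Moreover, as t → 0, Ω(t) − [ t(A + B + C) + (t²/2)([A,B] + [A,C] + [B,C]) + t³( (1/4)[[A,B],C] − (1/4)(ACB + BCA) − (1/4)(ABA + ACA + BAB + BCB + CAC + CBC) ) ] = O(t⁴), i.e. there exist C₀, δ > 0 such that the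 norm of this difference is at most C₀|t|⁴ for |t| < δ. (Cayley–BCH formula for a product of three Cayley transforms.) -/
/-!
Each Cayley factor `X = Cay(tA)` satisfies `(1 - tA/2) X = 1 + tA/2`, and `Ω` satisfies
`(1 + P) Ω = 2 (P - 1)`. Third-order expansions in `t` with `O(t⁴)` remainders multiply like
truncated power series, and an expansion of `f` can be read off from a relation `g f = h` as soon
as the constant term of `g` is invertible, because the inverse of `g t` then stays bounded near
`0`. Solving the resulting triangular systems gives the expansion of `P`, then that of `Ω`; matching
it with the stated coefficients is a noncommutative polynomial identity of degree three.
-/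

open Filter Topology Asymptotics
open scoped Ring

theorem exists_pos_forall_abs_lt_of_eventually_of_isBigO_pow {E : Type*} [Norm E]
    {Q : ℝ → Prop} {e : ℝ → E} {k : ℕ} (hQ : ∀ᶠ t in 𝓝 0, Q t)
    (he : e =O[𝓝 0] fun t => t ^ k) :
    ∃ δ > 0, (∀ t : ℝ, |t| < δ → Q t) ∧ ∃ C₀ > 0, ∀ t : ℝ, |t| < δ → ‖e t‖ ≤ C₀ * |t| ^ k := by
  obtain ⟨c, hc⟩ := he.bound
  obtain ⟨δ, hδ, hδt⟩ := Metric.eventually_nhds_iff.mp (hQ.and hc)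
  have hball : ∀ t : ℝ, |t| < δ → dist t 0 < δ := fun t ht => by rwa [Real.dist_0_eq_abs]
  refine ⟨δ, hδ, fun t ht => (hδt (hball t ht)).1, max c 1, by positivity, fun t ht => ?_⟩
  calc ‖e t‖ ≤ c * ‖t ^ k‖ := (hδt (hball t ht)).2
    _ ≤ max c 1 * |t| ^ k := by
      rw [norm_pow, Real.norm_eq_abs]
      gcongr
      exact le_max_left _ _

section Module

variable {M : Type*} [NormedAddCommGroup M] [NormedSpace ℂ M]

def cubicPoly (a₀ a₁ a₂ a₃ : M) (t : ℝ) : M :=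
  a₀ + (t : ℂ) • a₁ + (t : ℂ) ^ 2 • a₂ + (t : ℂ) ^ 3 • a₃

theorem continuous_cubicPoly (a₀ a₁ a₂ a₃ : M) : Continuous (cubicPoly a₀ a₁ a₂ a₃) := by
  unfold cubicPoly
  fun_prop

def HasCubicExpansion (f : ℝ → M) (a₀ a₁ a₂ a₃ : M) : Prop :=
  (fun t => f t - cubicPoly a₀ a₁ a₂ a₃ t) =O[𝓝 0] fun t => t ^ 4

variable {f g : ℝ → M} {a₀ a₁ a₂ a₃ b₀ b₁ b₂ b₃ : M}

theorem HasCubicExpansion.of_eq (h : ∀ t, f t = cubicPoly a₀ a₁ a₂ a₃ t) :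
    HasCubicExpansion f a₀ a₁ a₂ a₃ :=
  (isBigO_zero _ _).congr_left fun t => by rw [h, sub_self]

theorem hasCubicExpansion_const (c : M) : HasCubicExpansion (fun _ => c) c 0 0 0 :=
  .of_eq fun t => by simp [cubicPoly]

theorem HasCubicExpansion.add (hf : HasCubicExpansion f a₀ a₁ a₂ a₃)
    (hg : HasCubicExpansion g b₀ b₁ b₂ b₃) :
    HasCubicExpansion (fun t => f t + g t) (a₀ + b₀) (a₁ + b₁) (a₂ + b₂) (a₃ + b₃) :=
  (IsBigO.add hf hg).congr_left fun t => by simp only [cubicPoly]; module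

theorem HasCubicExpansion.sub (hf : HasCubicExpansion f a₀ a₁ a₂ a₃)
    (hg : HasCubicExpansion g b₀ b₁ b₂ b₃) :
    HasCubicExpansion (fun t => f t - g t) (a₀ - b₀) (a₁ - b₁) (a₂ - b₂) (a₃ - b₃) :=
  (IsBigO.sub hf hg).congr_left fun t => by simp only [cubicPoly]; module

theorem HasCubicExpansion.const_smul (hf : HasCubicExpansion f a₀ a₁ a₂ a₃) (c : ℂ) :
    HasCubicExpansion (fun t => c • f t) (c • a₀) (c • a₁) (c • a₂) (c • a₃) :=
  (IsBigO.const_smul_left hf c).congr_left fun t => by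
    simp only [Pi.smul_apply, cubicPoly, smul_sub, smul_add, smul_comm c]

theorem HasCubicExpansion.tendsto (hf : HasCubicExpansion f a₀ a₁ a₂ a₃) :
    Tendsto f (𝓝 0) (𝓝 a₀) := by
  have hpoly : Tendsto (cubicPoly a₀ a₁ a₂ a₃) (𝓝 0) (𝓝 a₀) := by
    simpa [cubicPoly] using (continuous_cubicPoly a₀ a₁ a₂ a₃).tendsto 0
  have herr : Tendsto (fun t => f t - cubicPoly a₀ a₁ a₂ a₃ t) (𝓝 0) (𝓝 0) :=
    hf.trans_tendsto (by simpa using (continuous_pow 4).tendsto (0 : ℝ))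
  simpa using herr.add hpoly

end Module

section Algebra

variable {M : Type*} [NormedRing M] [NormedAlgebra ℂ M]
variable {f g h : ℝ → M} {a₀ a₁ a₂ a₃ b₀ b₁ b₂ b₃ c₀ c₁ c₂ c₃ : M}

theorem HasCubicExpansion.mul (hf : HasCubicExpansion f a₀ a₁ a₂ a₃)
    (hg : HasCubicExpansion g b₀ b₁ b₂ b₃) :
    HasCubicExpansion (fun t => f t * g t) (a₀ * b₀) (a₀ * b₁ + a₁ * b₀)
      (a₀ * b₂ + a₁ * b₁ + a₂ * b₀) (a₀ * b₃ + a₁ * b₂ + a₂ * b₁ + a₃ * b₀) := by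
  set p := cubicPoly a₀ a₁ a₂ a₃
  set q := cubicPoly b₀ b₁ b₂ b₃
  set r : ℝ → M := fun t =>
    a₁ * b₃ + a₂ * b₂ + a₃ * b₁ + (t : ℂ) • (a₂ * b₃ + a₃ * b₂) + (t : ℂ) ^ 2 • (a₃ * b₃)
  have hpq : ∀ t, cubicPoly (a₀ * b₀) (a₀ * b₁ + a₁ * b₀) (a₀ * b₂ + a₁ * b₁ + a₂ * b₀)
      (a₀ * b₃ + a₁ * b₂ + a₂ * b₁ + a₃ * b₀) t = p t * q t - (t : ℂ) ^ 4 • r t := by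
    intro t
    simp only [p, q, r, cubicPoly, add_mul, mul_add, smul_mul_assoc, mul_smul_comm, smul_add]
    module
  have hp : p =O[𝓝 0] fun _ => (1 : ℝ) :=
    ((continuous_cubicPoly a₀ a₁ a₂ a₃).tendsto 0).isBigO_one ℝ
  have hr : r =O[𝓝 0] fun _ => (1 : ℝ) :=
    ((show Continuous r by fun_prop).tendsto 0).isBigO_one ℝ
  have ht : (fun t : ℝ => (t : ℂ) ^ 4) =O[𝓝 0] fun t => t ^ 4 :=
    IsBigO.of_bound 1 (Eventually.of_forall fun t => by simp)
  have h₁ : (fun t => (f t - p t) * g t) =O[𝓝 0] fun t => t ^ 4 := by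
    simpa using IsBigO.mul hf (hg.tendsto.isBigO_one ℝ)
  have h₂ : (fun t => p t * (g t - q t)) =O[𝓝 0] fun t => t ^ 4 := by
    simpa using hp.mul hg
  have h₃ : (fun t : ℝ => (t : ℂ) ^ 4 • r t) =O[𝓝 0] fun t => t ^ 4 := by
    simpa using ht.smul hr
  refine ((h₁.add h₂).add h₃).congr_left fun t => ?_
  rw [hpq]
  noncomm_ring

variable [HasSummableGeomSeries M]

theorem HasCubicExpansion.eventually_isUnit (hf : HasCubicExpansion f a₀ a₁ a₂ a₃)
    (ha₀ : IsUnit a₀) : ∀ᶠ t in 𝓝 0, IsUnit (f t) :=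
  hf.tendsto.eventually (Units.isOpen.mem_nhds ha₀)

theorem HasCubicExpansion.of_mul_eq (hg : HasCubicExpansion g b₀ b₁ b₂ b₃) (hb₀ : IsUnit b₀)
    (hh : HasCubicExpansion h c₀ c₁ c₂ c₃) (hgf : ∀ᶠ t in 𝓝 0, g t * f t = h t)
    (h₀ : b₀ * a₀ = c₀) (h₁ : b₀ * a₁ + b₁ * a₀ = c₁) (h₂ : b₀ * a₂ + b₁ * a₁ + b₂ * a₀ = c₂)
    (h₃ : b₀ * a₃ + b₁ * a₂ + b₂ * a₁ + b₃ * a₀ = c₃) : HasCubicExpansion f a₀ a₁ a₂ a₃ := by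
  set p := cubicPoly a₀ a₁ a₂ a₃
  have hgp : HasCubicExpansion (fun t => g t * p t) c₀ c₁ c₂ c₃ := by
    subst h₀ h₁ h₂ h₃
    exact hg.mul (.of_eq fun _ => rfl)
  have hinv : (fun t => (g t)⁻¹ʳ) =O[𝓝 0] fun _ => (1 : ℝ) :=
    ((NormedRing.inverse_continuousAt hb₀.unit).tendsto.comp hg.tendsto).isBigO_one ℝ
  have hgfp : (fun t => g t * (f t - p t)) =O[𝓝 0] fun t => t ^ 4 := by
    refine (IsBigO.sub hh hgp).congr' ?_ EventuallyEq.rfl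
    filter_upwards [hgf] with t ht
    rw [mul_sub, ht]
    abel
  refine (IsBigO.mul hinv hgfp).congr' ?_ (Eventually.of_forall fun t => one_mul _)
  filter_upwards [hg.eventually_isUnit hb₀] with t ht
  exact Ring.inverse_mul_cancel_left _ _ ht

end Algebra

section Cayley

variable {M : Type*} [Ring M] [Algebra ℂ M]

theorem isUnit_two : IsUnit (2 : M) := by
  simpa only [map_ofNat] using (IsUnit.mk0 (2 : ℂ) two_ne_zero).map (algebraMap ℂ M)

noncomputable def cayley (x : M) : M := (1 - (1 / 2 : ℂ) • x)⁻¹ʳ * (1 + (1 / 2 : ℂ) • x)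

noncomputable def invCayley (p : M) : M := (2 : ℂ) • ((p - 1) * (1 + p)⁻¹ʳ)

theorem one_add_mul_invCayley {p : M} (hp : IsUnit (1 + p)) :
    (1 + p) * invCayley p = (2 : ℂ) • (p - 1) := by
  rw [invCayley, mul_smul_comm, ← mul_assoc, (Commute.one_left p).add_left (Commute.refl p)
    |>.sub_right (Commute.one_right _) |>.eq, Ring.mul_inverse_cancel_right _ _ hp]

theorem cayley_invCayley {p : M} (hp : IsUnit (1 + p)) : cayley (invCayley p) = p := by
  have hΩ := one_add_mul_invCayley hp
  have hminus : (1 + p) * (1 - (1 / 2 : ℂ) • invCayley p) = 2 := by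
    rw [mul_sub, mul_one, mul_smul_comm, hΩ, smul_smul]
    norm_num
    rw [← one_add_one_eq_two]
    abel
  have hplus : (1 + p) * (1 + (1 / 2 : ℂ) • invCayley p) = 2 * p := by
    rw [mul_add, mul_one, mul_smul_comm, hΩ, smul_smul]
    norm_num
    rw [two_mul]
    abel
  have hunit : IsUnit (1 - (1 / 2 : ℂ) • invCayley p) := by
    rw [← Ring.inverse_mul_cancel_left _ (1 - (1 / 2 : ℂ) • invCayley p) hp, hminus]
    exact hp.ringInverse.mul isUnit_two
  rw [cayley, Ring.inverse_mul_eq_iff_eq_mul _ _ _ hunit]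
  apply hp.mul_left_cancel
  rw [hplus, ← mul_assoc, hminus]

end Cayley

section CayleyExpansion

variable {M : Type*} [NormedRing M] [NormedAlgebra ℂ M] [HasSummableGeomSeries M]

theorem hasCubicExpansion_cayley (a : M) :
    HasCubicExpansion (fun t : ℝ => cayley ((t : ℂ) • a)) 1 a ((1 / 2 : ℂ) • (a * a))
      ((1 / 4 : ℂ) • (a * a * a)) := by
  have hminus : HasCubicExpansion (fun t : ℝ => 1 - (1 / 2 : ℂ) • ((t : ℂ) • a)) 1
      (-(1 / 2 : ℂ) • a) 0 0 :=
    .of_eq fun t => by simp only [cubicPoly]; module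
  have hplus : HasCubicExpansion (fun t : ℝ => 1 + (1 / 2 : ℂ) • ((t : ℂ) • a)) 1
      ((1 / 2 : ℂ) • a) 0 0 :=
    .of_eq fun t => by simp only [cubicPoly]; module
  refine hminus.of_mul_eq isUnit_one hplus ?_ ?_ ?_ ?_ ?_
  · filter_upwards [hminus.eventually_isUnit isUnit_one] with t ht
    exact Ring.mul_inverse_cancel_left _ _ ht
  all_goals simp only [one_mul, mul_one, zero_mul, add_zero, smul_mul_assoc, mul_smul_comm,
    smul_smul, mul_assoc] <;> module

theorem hasCubicExpansion_cayley_mul_cayley_mul_cayley (a b c : M) :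
    HasCubicExpansion
      (fun t : ℝ => cayley ((t : ℂ) • a) * cayley ((t : ℂ) • b) * cayley ((t : ℂ) • c)) 1
      (a + b + c) ((1 / 2 : ℂ) • (a * a + b * b + c * c) + (a * b + a * c + b * c))
      ((1 / 4 : ℂ) • (a * a * a + b * b * b + c * c * c)
        + (1 / 2 : ℂ) • (a * a * b + a * a * c + a * b * b + a * c * c + b * b * c + b * c * c)
        + a * b * c) := by
  convert ((hasCubicExpansion_cayley a).mul (hasCubicExpansion_cayley b)).mul
    (hasCubicExpansion_cayley c) using 1 <;>
  simp only [one_mul, mul_one, smul_mul_assoc, mul_smul_comm, add_mul, smul_add, mul_assoc] <;>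
  module

theorem HasCubicExpansion.invCayley {p : ℝ → M} {p₁ p₂ p₃ : M}
    (hp : HasCubicExpansion p 1 p₁ p₂ p₃) :
    HasCubicExpansion (fun t => invCayley (p t)) 0 p₁ (p₂ - (1 / 2 : ℂ) • (p₁ * p₁))
      (p₃ - (1 / 2 : ℂ) • (p₁ * p₂ + p₂ * p₁) + (1 / 4 : ℂ) • (p₁ * p₁ * p₁)) := by
  have hg := (hasCubicExpansion_const 1).add hp
  have hh := (hp.sub (hasCubicExpansion_const 1)).const_smul (2 : ℂ)
  rw [one_add_one_eq_two] at hg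
  refine hg.of_mul_eq isUnit_two hh ?_ ?_ ?_ ?_ ?_
  · filter_upwards [hg.eventually_isUnit isUnit_two] with t ht
    exact one_add_mul_invCayley ht
  all_goals simp only [zero_add, sub_zero, sub_self, smul_zero, mul_zero, two_mul, mul_add,
    mul_sub, mul_smul_comm, smul_add, mul_assoc] <;> module

theorem hasCubicExpansion_invCayley_cayley_mul_cayley_mul_cayley (a b c : M) :
    HasCubicExpansion
      (fun t : ℝ => invCayley (cayley ((t : ℂ) • a) * cayley ((t : ℂ) • b) * cayley ((t : ℂ) • c)))
      0 (a + b + c) ((1 / 2 : ℂ) • ((a * b - b * a) + (a * c - c * a) + (b * c - c * b)))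
      ((1 / 4 : ℂ) • ((a * b - b * a) * c - c * (a * b - b * a))
        - (1 / 4 : ℂ) • (a * c * b + b * c * a)
        - (1 / 4 : ℂ) •
          (a * b * a + a * c * a + b * a * b + b * c * b + c * a * c + c * b * c)) := by
  convert (hasCubicExpansion_cayley_mul_cayley_mul_cayley a b c).invCayley using 1 <;>
  simp only [add_mul, mul_add, sub_mul, mul_sub, smul_mul_assoc, mul_smul_comm, smul_add,
    smul_sub, mul_assoc] <;>
  module

end CayleyExpansion

attribute [local instance] Matrix.frobeniusNormedAddCommGroup Matrix.frobeniusNormedSpace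
  Matrix.frobeniusNormedRing

theorem cayley_BCH_three_general
    (n : ℕ)
    (A B C : Matrix (Fin n) (Fin n) ℂ)
    (P Ωf : ℝ → Matrix (Fin n) (Fin n) ℂ)
    (hP : ∀ t : ℝ, P t =
      (1 - ((t:ℂ)/2) • A)⁻¹ * (1 + ((t:ℂ)/2) • A) *
      ((1 - ((t:ℂ)/2) • B)⁻¹ * (1 + ((t:ℂ)/2) • B)) *
      ((1 - ((t:ℂ)/2) • C)⁻¹ * (1 + ((t:ℂ)/2) • C)))
    (hΩ : ∀ t : ℝ, Ωf t = (2:ℂ) • ((P t - 1) * (1 + P t)⁻¹)) :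
    ∃ δ > 0,
      (∀ t : ℝ, |t| < δ →
        IsUnit (1 - ((t:ℂ)/2) • A) ∧ IsUnit (1 - ((t:ℂ)/2) • B) ∧
        IsUnit (1 - ((t:ℂ)/2) • C) ∧ IsUnit (1 + P t) ∧
        (1 - (1/2 : ℂ) • Ωf t)⁻¹ * (1 + (1/2 : ℂ) • Ωf t) = P t) ∧
      ∃ C₀ > 0, ∀ t : ℝ, |t| < δ →
        ‖Ωf t - ((t:ℂ) • (A + B + C)
          + ((t:ℂ)^2/2) • ((A*B - B*A) + (A*C - C*A) + (B*C - C*B))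
          + (t:ℂ)^3 • ((1/4 : ℂ) • ((A*B - B*A)*C - C*(A*B - B*A))
            - (1/4 : ℂ) • (A*C*B + B*C*A)
            - (1/4 : ℂ) • (A*B*A + A*C*A + B*A*B + B*C*B + C*A*C + C*B*C)))‖
          ≤ C₀ * |t|^4 := by
  let _ : NormedAlgebra ℂ (Matrix (Fin n) (Fin n) ℂ) := Matrix.frobeniusNormedAlgebra
  have hPc : P = fun t : ℝ =>
      cayley ((t : ℂ) • A) * cayley ((t : ℂ) • B) * cayley ((t : ℂ) • C) := by
    funext t
    simp only [hP, cayley, Matrix.nonsing_inv_eq_ringInverse, smul_smul, one_div,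
      inv_mul_eq_div]
  have hΩc : ∀ t, Ωf t = invCayley (P t) := fun t => by
    rw [hΩ, invCayley, Matrix.nonsing_inv_eq_ringInverse]
  have hPexp := hPc ▸ hasCubicExpansion_cayley_mul_cayley_mul_cayley A B C
  have hΩfun : Ωf = fun t : ℝ =>
      invCayley (cayley ((t : ℂ) • A) * cayley ((t : ℂ) • B) * cayley ((t : ℂ) • C)) :=
    funext fun t => by rw [hΩc, hPc]
  have hΩexp := hΩfun ▸ hasCubicExpansion_invCayley_cayley_mul_cayley_mul_cayley A B C
  have hfactor : ∀ X : Matrix (Fin n) (Fin n) ℂ, ∀ᶠ t : ℝ in 𝓝 0, IsUnit (1 - ((t : ℂ) / 2) • X) :=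
    fun X => ((show Continuous fun t : ℝ => 1 - ((t : ℂ) / 2) • X by fun_prop).tendsto' 0 1
      (by simp)).eventually (Units.isOpen.mem_nhds isUnit_one)
  have hsum : ∀ᶠ t : ℝ in 𝓝 0, IsUnit (1 + P t) :=
    (tendsto_const_nhds.add hPexp.tendsto).eventually
      (Units.isOpen.mem_nhds (by rw [one_add_one_eq_two]; exact isUnit_two))
  obtain ⟨δ, hδ, hunits, C₀, hC₀, hbound⟩ := exists_pos_forall_abs_lt_of_eventually_of_isBigO_pow
    (((hfactor A).and (hfactor B)).and ((hfactor C).and hsum)) hΩexp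
  refine ⟨δ, hδ, fun t ht => ?_, C₀, hC₀, fun t ht => ?_⟩
  · obtain ⟨⟨hA, hB⟩, hC, hPt⟩ := hunits t ht
    refine ⟨hA, hB, hC, hPt, ?_⟩
    rw [Matrix.nonsing_inv_eq_ringInverse, hΩc]
    exact cayley_invCayley hPt
  · refine (le_of_eq ?_).trans (hbound t ht)
    congr 2
    simp only [cubicPoly]
    module

/-- Cayley–BCH formula for a product of three Cayley transforms, up to
order four. -/
theorem cayley_BCH_three
    (n : ℕ) (hn : 1 ≤ n)
    (A B C : Matrix (Fin n) (Fin n) ℂ)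
    (P Ωf : ℝ → Matrix (Fin n) (Fin n) ℂ)
    (hP : ∀ t : ℝ, P t =
      (1 - ((t:ℂ)/2) • A)⁻¹ * (1 + ((t:ℂ)/2) • A) *
      ((1 - ((t:ℂ)/2) • B)⁻¹ * (1 + ((t:ℂ)/2) • B)) *
      ((1 - ((t:ℂ)/2) • C)⁻¹ * (1 + ((t:ℂ)/2) • C)))
    (hΩ : ∀ t : ℝ, Ωf t = (2:ℂ) • ((P t - 1) * (1 + P t)⁻¹)) :
    ∃ δ > 0,
      (∀ t : ℝ, |t| < δ →
        IsUnit (1 - ((t:ℂ)/2) • A) ∧ IsUnit (1 - ((t:ℂ)/2) • B) ∧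
        IsUnit (1 - ((t:ℂ)/2) • C) ∧ IsUnit (1 + P t) ∧
        (1 - (1/2 : ℂ) • Ωf t)⁻¹ * (1 + (1/2 : ℂ) • Ωf t) = P t) ∧
      ∃ C₀ > 0, ∀ t : ℝ, |t| < δ →
        ‖Ωf t - ((t:ℂ) • (A + B + C)
          + ((t:ℂ)^2/2) • ((A*B - B*A) + (A*C - C*A) + (B*C - C*B))
          + (t:ℂ)^3 • ((1/4 : ℂ) • ((A*B - B*A)*C - C*(A*B - B*A))
            - (1/4 : ℂ) • (A*C*B + B*C*A)
            - (1/4 : ℂ) • (A*B*A + A*C*A + B*A*B + B*C*B + C*A*C + C*B*C)))‖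
          ≤ C₀ * |t|^4 :=
  cayley_BCH_three_general n A B C P Ωf hP hΩ
end

section
/- Let α₁₁ = 2^{1/3}/3 + 2^{2/3}/6 + 2/3 (a real number), and set α₃₁ = α₁₁, α₂₁ = 1 − 2α₁₁, α₁₂ = α₁₁ − α₁₁², α₃₂ = −α₁₂, α₂₂ = 0. Then these real numbers satisfy the six fourth-order order-conditions for the commutator-free Cayley scheme: (1) α₁₁ + α₂₁ + α₃₁ = 1; (2) α₁₂ + α₂₂ + α₃₂ = 0; (3) α₁₁α₂₂ + α₁₁α₃₂ + α₂₁α₃₂ − α₁₂α₂₁ − α₁₂α₃₁ − α₂₂α₃₁ = −1/3; (4) 2α₁₁α₂₁α₃₁ + α₁₁²α₂₁ + α₁₁α₂₁² + α₁₁²α₃₁ + α₁₁α₃₁² + α₂₁²α₃₁ + α₂₁α₃₁² = 1/3; (5) 2α₁₁α₂₂α₃₁ + α₁₁α₁₂α₂₁ + α₁₁α₁₂α₃₁ + α₁₁α₂₁α₂₂ + α₁₁α₃₁α₃₂ + α₂₁α₂₂α₃₁ + α₂₁α₃₁α₃₂ = 0; (6) 2α₁₁α₂₁α₃₂ + α₁₁²α₂₂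 + α₁₁²α₃₂ + α₁₂α₂₁² + α₂₁²α₃₂ + α₁₂α₃₁² + α₂₂α₃₁² + 2α₁₂α₂₁α₃₁ − 2α₁₁α₂₂α₃₁ = 0. -/
/-- The coefficients of the fourth-order commutator-free Cayley scheme
satisfy the six order-conditions. -/
theorem cfct_order_conditions
    (a11 a12 a21 a22 a31 a32 : ℝ)
    (h11 : a11 = (2:ℝ)^((1:ℝ)/3)/3 + (2:ℝ)^((2:ℝ)/3)/6 + 2/3)
    (h31 : a31 = a11)
    (h21 : a21 = 1 - 2*a11)
    (h12 : a12 = a11 - a11^2)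
    (h32 : a32 = -a12)
    (h22 : a22 = 0) :
    a11 + a21 + a31 = 1 ∧
    a12 + a22 + a32 = 0 ∧
    a11*a22 + a11*a32 + a21*a32 - a12*a21 - a12*a31 - a22*a31 = -(1/3) ∧
    2*a11*a21*a31 + a11^2*a21 + a11*a21^2 + a11^2*a31 + a11*a31^2 + a21^2*a31 + a21*a31^2
      = 1/3 ∧
    2*a11*a22*a31 + a11*a12*a21 + a11*a12*a31 + a11*a21*a22 + a11*a31*a32 + a21*a22*a31
      + a21*a31*a32 = 0 ∧
    2*a11*a21*a32 + a11^2*a22 + a11^2*a32 + a12*a21^2 + a21^2*a32 + a12*a31^2 + a22*a31^2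
      + 2*a12*a21*a31 - 2*a11*a22*a31 = 0 := by
  subst h31 h21 h12 h32 h22
  set x : ℝ := (2:ℝ)^((1:ℝ)/3) with hxdef
  have hx : x ^ 3 = 2 := by
    rw [hxdef, ← Real.rpow_natCast ((2:ℝ)^((1:ℝ)/3)) 3, ← Real.rpow_mul (by norm_num)]
    norm_num
  have hy : (2:ℝ)^((2:ℝ)/3) = x ^ 2 := by
    rw [hxdef, ← Real.rpow_natCast ((2:ℝ)^((1:ℝ)/3)) 2, ← Real.rpow_mul (by norm_num)]
    norm_num
  rw [hy] at h11
  subst h11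
  refine ⟨by ring, by ring, ?_, ?_, by ring, by ring⟩
  · linear_combination (-(5:ℝ)/54 - x/9 - x^2/18 - x^3/108) * hx
  · linear_combination ((5:ℝ)/54 + x/9 + x^2/18 + x^3/108) * hx
end

section
/- Let the shifted Legendre polynomials be defined by P_0(x) = 1, P_1(x) = 2x − 1, and (n+1)P_{n+1}(x) = (2n+1)(2x−1)P_n(x) − n P_{n−1}(x) for n ≥ 1. Let d ≥ 1, let A : ℝ → ℂ^{d×d} be infinitely differentiable, and for k ≥ 1 and δt > 0 define the k-th Legendre coefficient A_k(δt) = (2k−1) δt ∫_0^1 A(x δt) P_{k−1}(x) dx. Then for every k ≥ 1, A_k(δt) = O(δt^k) as δt → 0⁺, i.e. there exist C, δ > 0 such that ‖A_k(δt)‖ ≤ C δt^k for all 0 < δt < δ. -/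
open scoped Matrix

attribute [local instance] Matrix.frobeniusNormedAddCommGroup Matrix.frobeniusNormedSpace
  Matrix.frobeniusNormedRing

/-- The shifted Legendre polynomials on `[0,1]`, defined by the recurrence
`P₀ = 1`, `P₁ = 2X − 1`, `(n+1) P_{n+1} = (2n+1)(2X−1) Pₙ − n P_{n−1}`. -/
noncomputable def shiftedLegendre : ℕ → Polynomial ℝ
  | 0 => 1
  | 1 => Polynomial.C 2 * Polynomial.X - 1
  | (n + 2) =>
      Polynomial.C ((2 * (n:ℝ) + 3) / ((n:ℝ) + 2)) *
        ((Polynomial.C 2 * Polynomial.X - 1) * shiftedLegendre (n + 1)) -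
      Polynomial.C (((n:ℝ) + 1) / ((n:ℝ) + 2)) * shiftedLegendre n

noncomputable def momF (n j : ℕ) : ℝ :=
  if j < n then 0 else (Nat.factorial j : ℝ)^2 / (Nat.factorial (j - n) * Nat.factorial (j + n + 1))

lemma facpos (t : ℕ) : (0:ℝ) < (Nat.factorial t : ℝ) := by
  exact_mod_cast Nat.factorial_pos t

lemma facne (t : ℕ) : (Nat.factorial t : ℝ) ≠ 0 := (facpos t).ne'

lemma facsucc (t : ℕ) : (Nat.factorial (t+1) : ℝ) = ((t:ℝ)+1) * Nat.factorial t := by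
  rw [Nat.factorial_succ]; push_cast; ring

lemma momF_rec (n j : ℕ) :
    momF (n+2) j =
      ((2*(n:ℝ)+3)/((n:ℝ)+2)) * (2 * momF (n+1) (j+1) - momF (n+1) j)
        - (((n:ℝ)+1)/((n:ℝ)+2)) * momF n j := by
  have hn2 : ((n:ℝ)+2) ≠ 0 := by positivity
  rcases lt_or_ge j n with h | h
  · simp only [momF]
    rw [if_pos (by omega), if_pos (by omega), if_pos (by omega), if_pos h]
    ring
  rcases eq_or_lt_of_le h with rfl | h
  · -- j = n
    simp only [momF]
    rw [if_pos (by omega), if_neg (by omega), if_pos (by omega), if_neg (by omega)]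
    rw [show n-n = 0 from Nat.sub_self n, show n+1+(n+1)+1 = (n+n+1)+1+1 from by omega]
    rw [facsucc (n+n+1+1), facsucc (n+n+1), facsucc n]
    simp only [Nat.sub_self, Nat.factorial_zero]
    field_simp
    push_cast
    ring
  rcases eq_or_lt_of_le (Nat.succ_le_of_lt h) with h' | h'
  · -- j = n+1
    have : j = n+1 := h'.symm
    subst this
    simp only [momF]
    rw [if_pos (by omega), if_neg (by omega), if_neg (by omega), if_neg (by omega)]
    rw [show n+1+1-(n+1) = 1 from by omega, show n+1-n = 1 from by omega,
      show n+1+1+(n+1)+1 = (n+n+1+1+1)+1 from by omega,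
      show n+1+(n+1)+1 = (n+n+1+1)+1 from by omega,
      show n+1+n+1 = (n+n+1)+1 from by omega]
    rw [facsucc (n+n+1+1+1), facsucc (n+n+1+1), facsucc (n+n+1), facsucc (n+1), facsucc n]
    simp only [Nat.factorial_one]
    field_simp
    push_cast
    simp only [Nat.sub_self, Nat.factorial_zero, Nat.cast_one]
    ring
  · -- j ≥ n+2
    obtain ⟨m, rfl⟩ : ∃ m, j = n+2+m := ⟨j - (n+2), by omega⟩
    simp only [momF]
    rw [if_neg (by omega), if_neg (by omega), if_neg (by omega), if_neg (by omega)]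
    rw [show n+2+m-(n+2) = m from by omega, show n+2+m+1-(n+1) = m+1+1 from by omega,
      show n+2+m-(n+1) = m+1 from by omega, show n+2+m-n = m+1+1 from by omega,
      show n+2+m+(n+2)+1 = (n+n+m+3+1)+1 from by omega,
      show n+2+m+1+(n+1)+1 = (n+n+m+3+1)+1 from by omega,
      show n+2+m+(n+1)+1 = (n+n+m+3)+1 from by omega,
      show n+2+m+n+1 = n+n+m+3 from by omega,
      show n+2+m+1 = (n+2+m)+1 from by omega]
    rw [facsucc (n+n+m+3+1), facsucc (n+n+m+3), facsucc (m+1), facsucc m, facsucc (n+2+m)]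
    field_simp
    push_cast
    ring

noncomputable def legMoment (n j : ℕ) : ℝ :=
  ∫ x in (0:ℝ)..1, (shiftedLegendre n).eval x * x ^ j

lemma legInt (n j : ℕ) :
    IntervalIntegrable (fun x => (shiftedLegendre n).eval x * x ^ j)
      MeasureTheory.volume 0 1 :=
  ((shiftedLegendre n).continuous.mul (continuous_pow j)).intervalIntegrable _ _

lemma legMoment_zero (j : ℕ) : legMoment 0 j = 1 / (j + 1 : ℝ) := by
  simp [legMoment, shiftedLegendre, integral_pow]

lemma legMoment_one (j : ℕ) :
    legMoment 1 j = 2 / (j + 2 : ℝ) - 1 / (j + 1 : ℝ) := by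
  have h : ∀ x : ℝ, (shiftedLegendre 1).eval x * x ^ j = 2 * x ^ (j+1) - x ^ j := by
    intro x; simp [shiftedLegendre]; ring
  rw [legMoment]
  simp_rw [h]
  rw [intervalIntegral.integral_sub ((intervalIntegral.intervalIntegrable_pow _).const_mul 2)
      (intervalIntegral.intervalIntegrable_pow _),
    intervalIntegral.integral_const_mul, integral_pow, integral_pow]
  push_cast; ring

lemma legMoment_rec (n j : ℕ) :
    legMoment (n+2) j =
      ((2*(n:ℝ)+3)/((n:ℝ)+2)) * (2 * legMoment (n+1) (j+1) - legMoment (n+1) j)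
        - (((n:ℝ)+1)/((n:ℝ)+2)) * legMoment n j := by
  have h : ∀ x:ℝ, (shiftedLegendre (n+2)).eval x * x^j =
      ((2*(n:ℝ)+3)/((n:ℝ)+2)) * (2 * ((shiftedLegendre (n+1)).eval x * x^(j+1))
        - (shiftedLegendre (n+1)).eval x * x^j)
      - (((n:ℝ)+1)/((n:ℝ)+2)) * ((shiftedLegendre n).eval x * x^j) := by
    intro x
    simp only [shiftedLegendre, Polynomial.eval_sub, Polynomial.eval_mul, Polynomial.eval_C,
      Polynomial.eval_X, Polynomial.eval_one]
    ring
  rw [legMoment]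
  simp_rw [h]
  rw [intervalIntegral.integral_sub
      ((((legInt (n+1) (j+1)).const_mul 2).sub (legInt (n+1) j)).const_mul _)
      ((legInt n j).const_mul _),
    intervalIntegral.integral_const_mul, intervalIntegral.integral_const_mul,
    intervalIntegral.integral_sub ((legInt (n+1) (j+1)).const_mul 2) (legInt (n+1) j),
    intervalIntegral.integral_const_mul]
  rfl

lemma legMoment_eq (n j : ℕ) : legMoment n j = momF n j := by
  have key : ∀ n, (∀ j, legMoment n j = momF n j) ∧ (∀ j, legMoment (n+1) j = momF (n+1) j) := by
    intro n
    induction n with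
    | zero =>
      constructor
      · intro j
        rw [legMoment_zero, momF, if_neg (by omega), Nat.sub_zero]
        rw [show j + 0 + 1 = j + 1 from by omega, facsucc]
        field_simp [facne j]
      · intro j
        rw [legMoment_one, momF]
        rcases Nat.eq_zero_or_pos j with rfl | hj
        · norm_num
        · obtain ⟨i, rfl⟩ : ∃ i, j = i + 1 := ⟨j - 1, by omega⟩
          rw [if_neg (by omega), show i+1-1 = i from by omega,
            show i+1+1+1 = (i+1)+1+1 from by omega]
          rw [facsucc (i+1+1), facsucc (i+1), facsucc i]
          field_simp
          push_cast
          ring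
    | succ n ih =>
      refine ⟨ih.2, fun j => ?_⟩
      rw [legMoment_rec, momF_rec, ih.1, ih.2, ih.2]
  exact (key n).1 j

lemma legMoment_orth {n j : ℕ} (h : j < n) : legMoment n j = 0 := by
  rw [legMoment_eq, momF, if_pos h]

/-- The k-th Legendre coefficient `A_k(δt)` of a smooth matrix function is
of order `O(δt^k)` as `δt → 0⁺`. -/
theorem legendre_coefficient_order
    (d : ℕ) (hd : 1 ≤ d)
    (A : ℝ → Matrix (Fin d) (Fin d) ℂ) (hA : ContDiff ℝ (⊤ : ℕ∞) A)
    (k : ℕ) (hk : 1 ≤ k) :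
    ∃ C > 0, ∃ δ > 0, ∀ δt : ℝ, 0 < δt → δt < δ →
      ‖(2 * (k:ℝ) - 1) • δt •
          ∫ x in (0:ℝ)..1, (shiftedLegendre (k - 1)).eval x • A (x * δt)‖
        ≤ C * δt ^ k := by
  obtain ⟨n, rfl⟩ : ∃ n, k = n + 1 := ⟨k - 1, by omega⟩
  simp only [Nat.add_sub_cancel]
  set s : Set ℝ := Set.Icc 0 1 with hs
  set P : Polynomial ℝ := shiftedLegendre n with hP
  -- Taylor remainder bound
  have hAs : ContDiffOn ℝ (n + 1) A s := (hA.of_le (by exact_mod_cast le_top)).contDiffOn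
  obtain ⟨C₀, hC₀⟩ := exists_taylor_mean_remainder_bound (zero_le_one (α := ℝ)) hAs
  -- bound on |P| on [0,1]
  obtain ⟨M₀, hM₀⟩ := isCompact_Icc.exists_bound_of_continuousOn
    (f := fun x : ℝ => P.eval x) (P.continuous.continuousOn)
  set M : ℝ := max M₀ 0 with hM
  have hMnn : 0 ≤ M := le_max_right _ _
  have hMb : ∀ x ∈ s, |P.eval x| ≤ M := fun x hx =>
    le_trans (by simpa using hM₀ x hx) (le_max_left _ _)
  set D : Matrix (Fin d) (Fin d) ℂ := iteratedDerivWithin n A s 0 with hD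
  set K₁ : ℝ := ((n.factorial : ℝ))⁻¹ * |legMoment n n| * ‖D‖ with hK₁
  set K₂ : ℝ := M * max C₀ 0 with hK₂
  have hK₁nn : 0 ≤ K₁ := by positivity
  have hK₂nn : 0 ≤ K₂ := mul_nonneg hMnn (le_max_right _ _)
  refine ⟨(2 * (n:ℝ) + 1) * (K₁ + K₂) + 1, by positivity, 1, one_pos, fun δt hδt hδt1 => ?_⟩
  -- the Taylor polynomial part, written explicitly
  set g : ℝ → Matrix (Fin d) (Fin d) ℂ := fun x =>
    ∑ i ∈ Finset.range (n + 1),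
      (P.eval x * ((i.factorial : ℝ)⁻¹ * (x * δt) ^ i)) • iteratedDerivWithin i A s 0 with hg
  have hgdef : ∀ x : ℝ, P.eval x • taylorWithinEval A n s 0 (x * δt) = g x := by
    intro x
    rw [hg, taylor_within_apply, Finset.smul_sum]
    simp_rw [smul_smul, sub_zero]
  have hgcont : Continuous g := by
    refine continuous_finset_sum _ fun i _ => Continuous.smul (f := fun x => P.eval x * ((i.factorial : ℝ)⁻¹ * (x * δt) ^ i))
      (g := fun _ => iteratedDerivWithin i A s 0) ?_ continuous_const
    exact P.continuous.mul (continuous_const.mul ((continuous_id.mul continuous_const).pow i))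
  have hfcont : Continuous fun x : ℝ => P.eval x • A (x * δt) :=
    P.continuous.smul (hA.continuous.comp (continuous_id.mul continuous_const))
  have hgint :=
    hgcont.intervalIntegrable (μ := MeasureTheory.volume) 0 1
  have hfint :=
    hfcont.intervalIntegrable (μ := MeasureTheory.volume) 0 1
  -- value of ∫ g
  have hgval : (∫ x in (0:ℝ)..1, g x)
      = (((n.factorial : ℝ))⁻¹ * δt ^ n * legMoment n n) • D := by
    rw [hg, intervalIntegral.integral_finset_sum]
    · have term : ∀ i ∈ Finset.range (n + 1),
          (∫ x in (0:ℝ)..1, (P.eval x * ((i.factorial : ℝ)⁻¹ * (x * δt) ^ i)) •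
              iteratedDerivWithin i A s 0)
            = (((i.factorial : ℝ))⁻¹ * δt ^ i * legMoment n i) • iteratedDerivWithin i A s 0 := by
        intro i _
        rw [intervalIntegral.integral_smul_const]
        congr 1
        have : ∀ x : ℝ, P.eval x * ((i.factorial : ℝ)⁻¹ * (x * δt) ^ i)
            = ((i.factorial : ℝ)⁻¹ * δt ^ i) * (P.eval x * x ^ i) := by
          intro x; rw [mul_pow]; ring
        simp_rw [this]
        rw [intervalIntegral.integral_const_mul]
        rw [legMoment]
      rw [Finset.sum_congr rfl term, Finset.sum_range_succ]
      have zero_terms : ∀ i ∈ Finset.range n,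
          (((i.factorial : ℝ))⁻¹ * δt ^ i * legMoment n i) • iteratedDerivWithin i A s 0
            = 0 := by
        intro i hi
        rw [legMoment_orth (Finset.mem_range.mp hi), mul_zero, zero_smul]
      rw [Finset.sum_congr rfl zero_terms, Finset.sum_const_zero, zero_add]
    · intro i _
      exact ((P.continuous.mul (continuous_const.mul
        ((continuous_id.mul continuous_const).pow i))).smul continuous_const).intervalIntegrable _ _
  -- bound on ‖∫ g‖
  have hgnorm : ‖∫ x in (0:ℝ)..1, g x‖ ≤ K₁ * δt ^ n := by
    rw [hgval, norm_smul]
    have h1 : ‖((n.factorial : ℝ))⁻¹ * δt ^ n * legMoment n n‖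
        ≤ ((n.factorial : ℝ))⁻¹ * |legMoment n n| * δt ^ n := by
      rw [Real.norm_eq_abs, abs_mul, abs_mul, abs_pow, abs_of_pos hδt,
        abs_of_nonneg (by positivity : (0:ℝ) ≤ ((n.factorial : ℝ))⁻¹)]
      ring_nf; exact le_refl _
    calc ‖((n.factorial : ℝ))⁻¹ * δt ^ n * legMoment n n‖ * ‖D‖
        ≤ (((n.factorial : ℝ))⁻¹ * |legMoment n n| * δt ^ n) * ‖D‖ :=
          mul_le_mul_of_nonneg_right h1 (norm_nonneg _)
      _ = K₁ * δt ^ n := by rw [hK₁]; ring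
  -- bound on remainder integral
  have hrem : ‖∫ x in (0:ℝ)..1,
      (P.eval x • A (x * δt) - g x)‖ ≤ K₂ * δt ^ n := by
    have hb : ∀ x ∈ Set.uIoc (0:ℝ) 1,
        ‖P.eval x • A (x * δt) - g x‖ ≤ K₂ * δt ^ n := by
      intro x hx
      rw [Set.uIoc_of_le (zero_le_one)] at hx
      have hx0 : 0 < x := hx.1
      have hx1 : x ≤ 1 := hx.2
      have hxs : x ∈ s := ⟨hx0.le, hx1⟩
      have hxδt : x * δt ∈ s := by
        constructor
        · positivity
        · calc x * δt ≤ 1 * δt := by nlinarith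
            _ ≤ 1 := by linarith
      rw [← hgdef, ← smul_sub, norm_smul]
      have h2 := hC₀ (x * δt) hxδt
      rw [sub_zero] at h2
      have h3 : ‖A (x * δt) - taylorWithinEval A n s 0 (x * δt)‖
          ≤ max C₀ 0 * δt ^ n := by
        calc ‖A (x * δt) - taylorWithinEval A n s 0 (x * δt)‖
            ≤ C₀ * (x * δt) ^ (n + 1) := h2
          _ ≤ max C₀ 0 * (x * δt) ^ (n + 1) :=
              mul_le_mul_of_nonneg_right (le_max_left _ _) (by positivity)
          _ ≤ max C₀ 0 * δt ^ (n + 1) := by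
              apply mul_le_mul_of_nonneg_left _ (le_max_right _ _)
              apply pow_le_pow_left₀ (by positivity)
              nlinarith
          _ = max C₀ 0 * (δt ^ n * δt) := by ring
          _ ≤ max C₀ 0 * (δt ^ n * 1) := by
              apply mul_le_mul_of_nonneg_left _ (le_max_right _ _)
              apply mul_le_mul_of_nonneg_left hδt1.le (by positivity)
          _ = max C₀ 0 * δt ^ n := by ring
      calc ‖P.eval x‖ * ‖A (x * δt) - taylorWithinEval A n s 0 (x * δt)‖
          ≤ M * (max C₀ 0 * δt ^ n) := by
            apply mul_le_mul (by simpa using hMb x hxs) h3 (norm_nonneg _) hMnn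
        _ = K₂ * δt ^ n := by rw [hK₂]; ring
    calc ‖∫ x in (0:ℝ)..1, (P.eval x • A (x * δt) - g x)‖
        ≤ K₂ * δt ^ n * |1 - 0| :=
          intervalIntegral.norm_integral_le_of_norm_le_const hb
      _ = K₂ * δt ^ n := by norm_num
  -- combine
  have hI : ‖∫ x in (0:ℝ)..1, P.eval x • A (x * δt)‖ ≤ (K₁ + K₂) * δt ^ n := by
    have split : (∫ x in (0:ℝ)..1, P.eval x • A (x * δt))
        = (∫ x in (0:ℝ)..1, g x) + ∫ x in (0:ℝ)..1, (P.eval x • A (x * δt) - g x) := by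
      rw [intervalIntegral.integral_sub hfint hgint]; abel
    rw [split]
    calc ‖(∫ x in (0:ℝ)..1, g x) + ∫ x in (0:ℝ)..1, (P.eval x • A (x * δt) - g x)‖
        ≤ ‖∫ x in (0:ℝ)..1, g x‖ + ‖∫ x in (0:ℝ)..1, (P.eval x • A (x * δt) - g x)‖ :=
          norm_add_le _ _
      _ ≤ K₁ * δt ^ n + K₂ * δt ^ n := add_le_add hgnorm hrem
      _ = (K₁ + K₂) * δt ^ n := by ring
  rw [norm_smul, norm_smul]
  have hcast : ‖(2 * ((n:ℝ) + 1) - 1)‖ = 2 * (n:ℝ) + 1 := by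
    have h0 : (0:ℝ) ≤ n := Nat.cast_nonneg n
    rw [Real.norm_eq_abs, abs_of_pos (by linarith)]; ring
  push_cast
  rw [hcast, Real.norm_eq_abs, abs_of_pos hδt]
  calc (2 * (n:ℝ) + 1) * (δt * ‖∫ x in (0:ℝ)..1, P.eval x • A (x * δt)‖)
      ≤ (2 * (n:ℝ) + 1) * (δt * ((K₁ + K₂) * δt ^ n)) := by
        apply mul_le_mul_of_nonneg_left _ (by positivity)
        exact mul_le_mul_of_nonneg_left hI hδt.le
    _ = (2 * (n:ℝ) + 1) * (K₁ + K₂) * δt ^ (n + 1) := by ring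
    _ ≤ ((2 * (n:ℝ) + 1) * (K₁ + K₂) + 1) * δt ^ (n + 1) := by nlinarith [pow_pos hδt (n+1)]
end
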